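/- arXiv:2308.11176 — 5 statements merged into one kernel-verified Lean document; each statement's English description precedes it below -/
import Mathlib

section
/- An m-network N (m ≥ 2) is proper forest-based if and only if there exists a surjective coloring σ : V(N) → {1,...,m} such that (C1) every non-root vertex has exactly one parent with the same color as itself, and (C2) every internal (non-leaf) vertex has at least one child with the same color as itself. -/
open Finset

namespace FB

/-- A finite directed graph given by its arc set. -/
structure Net (V : Type) where
  arcs : Finset (V × V)

namespace Net

variable {V : Type} [Fintype V] [DecidableEq V]

/-- `(u,v)` is an arc. -/
def Arc (N : Net V) (u v : V) : Prop := (u, v) ∈ N.arcs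

/-- Parents of a vertex. -/
def parents (N : Net V) (v : V) : Finset V := univ.filter (fun u => (u, v) ∈ N.arcs)

/-- Children of a vertex. -/
def children (N : Net V) (v : V) : Finset V := univ.filter (fun u => (v, u) ∈ N.arcs)

def inDeg (N : Net V) (v : V) : ℕ := (N.parents v).card
def outDeg (N : Net V) (v : V) : ℕ := (N.children v).card

def IsRoot (N : Net V) (v : V) : Prop := N.inDeg v = 0
def IsLeaf (N : Net V) (v : V) : Prop := N.outDeg v = 0
def IsRetic (N : Net V) (v : V) : Prop := 2 ≤ N.inDeg v
def IsTreeVertex (N : Net V) (v : V) : Prop := ¬ N.IsLeaf v ∧ N.inDeg v ≤ 1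

instance (N : Net V) : DecidablePred N.IsRoot := fun v => decidable_of_iff (N.inDeg v = 0) Iff.rfl
instance (N : Net V) : DecidablePred N.IsLeaf := fun v => decidable_of_iff (N.outDeg v = 0) Iff.rfl
instance (N : Net V) : DecidablePred N.IsRetic := fun v => decidable_of_iff (2 ≤ N.inDeg v) Iff.rfl

def roots (N : Net V) : Finset V := univ.filter (fun v => N.IsRoot v)
def leaves (N : Net V) : Finset V := univ.filter (fun v => N.IsLeaf v)

/-- Directed-acyclicity. -/
def Acyclic (N : Net V) : Prop := ∀ v, ¬ Relation.TransGen N.Arc v v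

/-- Weak (undirected) connectivity. -/
def Connected (N : Net V) : Prop :=
  ∀ u v : V, Relation.ReflTransGen (fun a b => N.Arc a b ∨ N.Arc b a) u v

/-- `N` is a network: a connected DAG in which leaves (sinks) have indegree 1,
roots (sources) have outdegree ≥ 2, reticulations have outdegree 1, and
no vertex has both indegree 1 and outdegree 1. -/
def IsNetwork (N : Net V) : Prop :=
  N.Acyclic ∧ N.Connected ∧
  (∀ v, N.IsLeaf v → N.inDeg v = 1) ∧
  (∀ v, N.IsRoot v → 2 ≤ N.outDeg v) ∧
  (∀ v, N.IsRetic v → N.outDeg v = 1) ∧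
  (∀ v, ¬ (N.inDeg v = 1 ∧ N.outDeg v = 1))

/-- An `m`-network: a network with exactly `m` roots. -/
def IsMNetwork (N : Net V) (m : ℕ) : Prop := N.IsNetwork ∧ N.roots.card = m

/-- `u` and `v` are in the same connected component (tree) of `N`. -/
def SameTree (N : Net V) (u v : V) : Prop :=
  Relation.ReflTransGen (fun a b => N.Arc a b ∨ N.Arc b a) u v

/-- `A'` spans a subdivision forest of `N`: a spanning subgraph in which every
vertex has indegree ≤ 1, with the same leaf set as `N`, and such that every
arc of `N` outside `A'` has its two endpoints in different trees. -/
def IsSubdivisionForest (N : Net V) (A' : Finset (V × V)) : Prop :=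
  A' ⊆ N.arcs ∧
  (∀ v, (Net.mk A' : Net V).inDeg v ≤ 1) ∧
  (∀ v, (Net.mk A' : Net V).IsLeaf v ↔ N.IsLeaf v) ∧
  (∀ a ∈ N.arcs, a ∉ A' → ¬ (Net.mk A' : Net V).SameTree a.1 a.2)

/-- `N` is proper forest-based: it has a subdivision forest with exactly `m`
trees (equivalently, `m` sources, as each tree of the forest has a unique source). -/
def ProperForestBased (N : Net V) (m : ℕ) : Prop :=
  ∃ A' : Finset (V × V), N.IsSubdivisionForest A' ∧ (Net.mk A' : Net V).roots.card = m

/-- (C1): every non-root vertex has exactly one parent of the same color. -/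
def C1 {C : Type} (N : Net V) (σ : V → C) : Prop :=
  ∀ v, ¬ N.IsRoot v → ∃! u, u ∈ N.parents v ∧ σ u = σ v

/-- (C2): every internal (non-leaf) vertex has at least one child of the same color. -/
def C2 {C : Type} (N : Net V) (σ : V → C) : Prop :=
  ∀ v, ¬ N.IsLeaf v → ∃ u ∈ N.children v, σ u = σ v

def Binary (N : Net V) : Prop :=
  (∀ v, N.inDeg v ≤ 2 ∧ N.outDeg v ≤ 2) ∧
  (∀ v, ¬ N.IsRoot v → N.inDeg v + N.outDeg v = 1 ∨ N.inDeg v + N.outDeg v = 3)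

def SemiBinary (N : Net V) : Prop := ∀ v, N.IsRetic v → N.inDeg v = 2

def QuasiBinary (N : Net V) : Prop :=
  (∀ v, N.IsTreeVertex v → N.outDeg v = 2) ∧
  (∀ v, N.IsRetic v → N.inDeg v = 2 ∨ N.inDeg v = 3)

def TreeChild (N : Net V) : Prop :=
  ∀ v, ¬ N.IsLeaf v → ∃ u ∈ N.children v, N.inDeg u ≤ 1

/-- An omnian: an internal vertex all of whose children are reticulations. -/
def Omnian (N : Net V) (v : V) : Prop := ¬ N.IsLeaf v ∧ ∀ u ∈ N.children v, N.IsRetic u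

instance (N : Net V) : DecidablePred N.Omnian :=
  fun v => decidable_of_iff (¬ N.IsLeaf v ∧ ∀ u ∈ N.children v, N.IsRetic u) Iff.rfl

/-- `GammaRel N g u` holds iff `g = γ_N(u)`: `g` has indegree ≠ 1 and there is a
directed path from `g` to `u` all of whose vertices after `g` have indegree 1. -/
def GammaRel (N : Net V) (g u : V) : Prop :=
  N.inDeg g ≠ 1 ∧ Relation.ReflTransGen (fun a b => N.Arc a b ∧ N.inDeg b = 1) g u

/-- The graph `Γ(N)`: vertices of indegree ≠ 1, with `v₁ ~ v₂` whenever there are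
distinct `u₁, u₂` with `γ_N(u₁) = v₁`, `γ_N(u₂) = v₂` sharing a child in `N`. -/
def gammaGraph (N : Net V) : SimpleGraph V where
  Adj v₁ v₂ := v₁ ≠ v₂ ∧ ∃ u₁ u₂, u₁ ≠ u₂ ∧ N.GammaRel v₁ u₁ ∧ N.GammaRel v₂ u₂ ∧
      ∃ c, N.Arc u₁ c ∧ N.Arc u₂ c
  symm := by
    constructor
    rintro a b ⟨hne, u₁, u₂, h12, h1, h2, c, hc1, hc2⟩
    exact ⟨hne.symm, u₂, u₁, h12.symm, h2, h1, c, hc2, hc1⟩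
  loopless := by constructor; rintro a ⟨hne, -⟩; exact hne rfl

/-- An omni-extension of `Γ(N)`: a supergraph of `Γ(N)` on the same vertex set such
that for every omnian `v` there is a child `h` of `v` whose other parent `u`
satisfies that `{h, γ_N(u)}` is an edge. -/
def OmniExtension (N : Net V) (G : SimpleGraph V) : Prop :=
  N.gammaGraph ≤ G ∧
  ∀ v, N.Omnian v → ∃ h ∈ N.children v, ∃ u ∈ N.parents h, u ≠ v ∧
    ∃ g, N.GammaRel g u ∧ G.Adj h g

/-- A minimal omni-extension: no proper subgraph on the same vertex set is an
omni-extension. -/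
def MinOmniExtension (N : Net V) (G : SimpleGraph V) : Prop :=
  N.OmniExtension G ∧ ∀ G' : SimpleGraph V, G' ≤ G → N.OmniExtension G' → G' = G

/-- (F1): the coloring restricted to the roots is a bijection onto the colors. -/
def F1 {m : ℕ} (N : Net V) (σ : V → Fin m) : Prop :=
  Set.InjOn σ ↑N.roots ∧ ∀ c : Fin m, ∃ ρ ∈ N.roots, σ ρ = c

/-- (F2): for every root `u` and reticulation `v` of the same color, there is a
directed path from `u` to `v` on which every reticulation has that color. -/
def F2 {m : ℕ} (N : Net V) (σ : V → Fin m) : Prop :=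
  ∀ u, N.IsRoot u → ∀ v, N.IsRetic v → σ u = σ v →
    Relation.ReflTransGen (fun a b => N.Arc a b ∧ (N.IsRetic b → σ b = σ u)) u v

/-- The resolution operation at a reticulation `v` with chosen parent `p` and
unique child `c`: new vertices `v₁ = Sum.inr 0`, `v₂ = Sum.inr 1`, `x_v = Sum.inr 2`;
arcs `(p,v)` and `(v,c)` are removed and arcs `(v,v₁)`, `(v₁,v₂)`, `(v₂,c)`,
`(v₁,x_v)`, `(p,v₂)` are added. -/
def resolve (N : Net V) (p v c : V) : Net (V ⊕ Fin 3) :=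
  ⟨((N.arcs.erase (p, v)).erase (v, c)).image (fun a => (Sum.inl a.1, Sum.inl a.2)) ∪
    {(Sum.inl v, Sum.inr 0), (Sum.inr 0, Sum.inr 1), (Sum.inr 1, Sum.inl c),
     (Sum.inr 0, Sum.inr 2), (Sum.inl p, Sum.inr 1)}⟩

end Net

/-- Isomorphism of arc-sets under a bijection of vertices. -/
def NetIso {V W : Type} (N : Net V) (M : Net W) : Prop :=
  ∃ e : V ≃ W, ∀ u v : V, (u, v) ∈ N.arcs ↔ (e u, e v) ∈ M.arcs

end FB

section Aux

open FB FB.Net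

variable {V : Type} [Fintype V] [DecidableEq V]

lemma FBaux.mem_parents {N : Net V} {u v : V} : u ∈ N.parents v ↔ (u, v) ∈ N.arcs := by
  simp [Net.parents]

lemma FBaux.mem_children {N : Net V} {u v : V} : u ∈ N.children v ↔ (v, u) ∈ N.arcs := by
  simp [Net.children]

lemma FBaux.isRoot_iff {N : Net V} {v : V} : N.IsRoot v ↔ ∀ u, (u, v) ∉ N.arcs := by
  simp [Net.IsRoot, Net.inDeg, Finset.card_eq_zero, Finset.eq_empty_iff_forall_notMem,
    Net.parents]

lemma FBaux.isLeaf_iff {N : Net V} {v : V} : N.IsLeaf v ↔ ∀ u, (v, u) ∉ N.arcs := by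
  simp [Net.IsLeaf, Net.outDeg, Finset.card_eq_zero, Finset.eq_empty_iff_forall_notMem,
    Net.children]

lemma FBaux.mem_roots {N : Net V} {v : V} : v ∈ N.roots ↔ N.IsRoot v := by
  simp [Net.roots]

end Aux

open FB FB.Net in
/-- An m-network N (m ≥ 2) is proper forest-based iff there is a
surjective m-coloring satisfying (C1) and (C2). -/
theorem stmt0 {V : Type} [Fintype V] [DecidableEq V] (N : Net V) (m : ℕ)
    (hm : 2 ≤ m) (hN : N.IsMNetwork m) :
    N.ProperForestBased m ↔
      ∃ σ : V → Fin m, Function.Surjective σ ∧ N.C1 σ ∧ N.C2 σ := by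
  obtain ⟨hnet, hcardN⟩ := hN
  have hacyc : N.Acyclic := hnet.1
  constructor
  · rintro ⟨A', ⟨hsub, hin, hleafiff, hsep⟩, hcard⟩
    -- Well-foundedness of the forest's arc relation
    haveI : IsTrans V (Relation.TransGen N.Arc) := ⟨fun _ _ _ => Relation.TransGen.trans⟩
    haveI : IsIrrefl V (Relation.TransGen N.Arc) := ⟨hacyc⟩
    have wfT : WellFounded (Relation.TransGen N.Arc) :=
      Finite.wellFounded_of_trans_of_irrefl _
    have wf : WellFounded (Net.mk A' : Net V).Arc :=
      Subrelation.wf (fun h => Relation.TransGen.single (hsub h)) wfT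
    have hFarc : ∀ u v : V, (Net.mk A' : Net V).Arc u v ↔ (u, v) ∈ A' := fun u v => Iff.rfl
    have hpar_unique : ∀ {u u' v : V}, (u, v) ∈ A' → (u', v) ∈ A' → u = u' := by
      intro u u' v h h'
      exact Finset.card_le_one.mp (hin v) u (FBaux.mem_parents.mpr h) u'
        (FBaux.mem_parents.mpr h')
    have hnotroot : ∀ {u v : V}, (u, v) ∈ A' → ¬ (Net.mk A' : Net V).IsRoot v := by
      intro u v h hr
      exact (FBaux.isRoot_iff.mp hr u) h
    have hnonroot_par : ∀ {v : V}, ¬ (Net.mk A' : Net V).IsRoot v → ∃ u, (u, v) ∈ A' := by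
      intro v hv
      by_contra hc
      push_neg at hc
      exact hv (FBaux.isRoot_iff.mpr hc)
    set RootOf : V → V → Prop :=
      fun r v => (Net.mk A' : Net V).IsRoot r ∧
        Relation.ReflTransGen (Net.mk A' : Net V).Arc r v with hRootOf
    have step_up : ∀ {r v : V}, RootOf r v → ¬ (Net.mk A' : Net V).IsRoot v →
        ∃ u, (u, v) ∈ A' ∧ RootOf r u := by
      rintro r v ⟨hr, hpath⟩ hv
      rcases Relation.ReflTransGen.cases_tail hpath with h | ⟨c, hc, harc⟩
      · exact absurd hr (h ▸ hv)
      · exact ⟨c, harc, hr, hc⟩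
    have hroot_ex : ∀ v : V, ∃ r, RootOf r v := by
      intro v
      refine wf.induction (C := fun v => ∃ r, RootOf r v) v ?_
      intro x IH
      by_cases hx : (Net.mk A' : Net V).IsRoot x
      · exact ⟨x, hx, Relation.ReflTransGen.refl⟩
      · obtain ⟨u, hu⟩ := hnonroot_par hx
        obtain ⟨r, hr, hpath⟩ := IH u hu
        exact ⟨r, hr, hpath.tail hu⟩
    have hroot_unique : ∀ v r1 r2 : V, RootOf r1 v → RootOf r2 v → r1 = r2 := by
      intro v
      refine wf.induction (C := fun v => ∀ r1 r2, RootOf r1 v → RootOf r2 v → r1 = r2) v ?_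
      intro x IH r1 r2 h1 h2
      by_cases hx : (Net.mk A' : Net V).IsRoot x
      · have e1 : r1 = x := by
          rcases Relation.ReflTransGen.cases_tail h1.2 with h | ⟨c, _, harc⟩
          · exact h.symm
          · exact absurd hx (hnotroot harc)
        have e2 : r2 = x := by
          rcases Relation.ReflTransGen.cases_tail h2.2 with h | ⟨c, _, harc⟩
          · exact h.symm
          · exact absurd hx (hnotroot harc)
        rw [e1, e2]
      · obtain ⟨u1, ha1, h1'⟩ := step_up h1 hx
        obtain ⟨u2, ha2, h2'⟩ := step_up h2 hx
        have : u1 = u2 := hpar_unique ha1 ha2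
        subst this
        exact IH u1 ha1 r1 r2 h1' h2'
    have htransfer : ∀ {w v r : V},
        ((Net.mk A' : Net V).Arc w v ∨ (Net.mk A' : Net V).Arc v w) →
        RootOf r w → RootOf r v := by
      rintro w v r (h | h) hr
      · exact ⟨hr.1, hr.2.tail h⟩
      · obtain ⟨u, hu, hru⟩ := step_up hr (hnotroot h)
        have : u = v := hpar_unique hu h
        exact this ▸ hru
    have hsame_root : ∀ {u v r : V}, (Net.mk A' : Net V).SameTree u v →
        RootOf r u → RootOf r v := by
      intro u v r hst
      induction hst with
      | refl => exact id
      | tail _ h IH => exact fun hr => htransfer h (IH hr)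
    choose rootFn hrootFn using hroot_ex
    have harc_eq : ∀ {u v : V}, (u, v) ∈ A' → rootFn u = rootFn v := by
      intro u v h
      exact hroot_unique v _ _ ⟨(hrootFn u).1, (hrootFn u).2.tail h⟩ (hrootFn v)
    have hfix : ∀ r : V, (Net.mk A' : Net V).IsRoot r → rootFn r = r := by
      intro r hr
      exact hroot_unique r _ r (hrootFn r) ⟨hr, Relation.ReflTransGen.refl⟩
    have hmemroots : ∀ v : V, rootFn v ∈ (Net.mk A' : Net V).roots :=
      fun v => FBaux.mem_roots.mpr (hrootFn v).1
    have symrel : Symmetric (fun a b => (Net.mk A' : Net V).Arc a b ∨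
        (Net.mk A' : Net V).Arc b a) := fun a b h => h.symm
    have hsame_of_root : ∀ {a b : V}, rootFn a = rootFn b →
        (Net.mk A' : Net V).SameTree a b := by
      intro a b h
      have h1 : (Net.mk A' : Net V).SameTree (rootFn a) a :=
        Relation.ReflTransGen.mono (fun _ _ h => Or.inl h) _ _ (hrootFn a).2
      have h2 : (Net.mk A' : Net V).SameTree (rootFn b) b :=
        Relation.ReflTransGen.mono (fun _ _ h => Or.inl h) _ _ (hrootFn b).2
      exact Relation.ReflTransGen.trans
        (by haveI : Std.Symm (fun a b => (Net.mk A' : Net V).Arc a b ∨ (Net.mk A' : Net V).Arc b a) := ⟨symrel⟩; exact Std.Symm.symm _ _ h1) (h ▸ h2)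
    set e := (Net.mk A' : Net V).roots.equivFin with he
    set σ : V → Fin m := fun v => (finCongr hcard) (e ⟨rootFn v, hmemroots v⟩) with hσ
    have hσeq : ∀ {a b : V}, rootFn a = rootFn b → σ a = σ b := by
      intro a b h
      simp only [hσ]
      exact congrArg _ (congrArg e (Subtype.ext h))
    have hσinj : ∀ {a b : V}, σ a = σ b → rootFn a = rootFn b := by
      intro a b h
      have := e.injective ((finCongr hcard).injective h)
      exact congrArg Subtype.val this
    refine ⟨σ, ?_, ?_, ?_⟩
    · intro c
      set s := e.symm ((finCongr hcard).symm c) with hs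
      refine ⟨s.1, ?_⟩
      have hroot : (Net.mk A' : Net V).IsRoot s.1 := FBaux.mem_roots.mp s.2
      have hfs : rootFn s.1 = s.1 := hfix _ hroot
      simp only [hσ]
      have : (⟨rootFn s.1, hmemroots s.1⟩ :
          {x // x ∈ (Net.mk A' : Net V).roots}) = s := Subtype.ext hfs
      rw [this, hs]
      simp
    · -- C1
      intro v hv
      have hrootsF : N.roots ⊆ (Net.mk A' : Net V).roots := by
        intro x hx
        rw [FBaux.mem_roots] at hx ⊢
        rw [FBaux.isRoot_iff] at hx ⊢
        exact fun u hu => hx u (hsub hu)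
      have hroots_eq : N.roots = (Net.mk A' : Net V).roots :=
        Finset.eq_of_subset_of_card_le hrootsF (by rw [hcard, hcardN])
      have hvF : ¬ (Net.mk A' : Net V).IsRoot v := by
        intro h
        exact hv (FBaux.mem_roots.mp (hroots_eq ▸ FBaux.mem_roots.mpr h))
      obtain ⟨u, hu⟩ := hnonroot_par hvF
      refine ⟨u, ⟨FBaux.mem_parents.mpr (hsub hu), hσeq (harc_eq hu)⟩, ?_⟩
      rintro u' ⟨hu', hσu'⟩
      by_cases hA : (u', v) ∈ A'
      · exact hpar_unique hA hu
      · exfalso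
        have hnst := hsep (u', v) (FBaux.mem_parents.mp hu') hA
        exact hnst (hsame_of_root (hσinj hσu'))
    · -- C2
      intro v hv
      have hvF : ¬ (Net.mk A' : Net V).IsLeaf v := fun h => hv ((hleafiff v).mp h)
      have : ∃ u, (v, u) ∈ A' := by
        by_contra hc
        push_neg at hc
        exact hvF (FBaux.isLeaf_iff.mpr hc)
      obtain ⟨u, hu⟩ := this
      exact ⟨u, FBaux.mem_children.mpr (hsub hu), (hσeq (harc_eq hu)).symm⟩
  · rintro ⟨σ, hsurj, hC1, hC2⟩
    set A' : Finset (V × V) := N.arcs.filter (fun a => σ a.1 = σ a.2) with hA'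
    have hmemA' : ∀ u v : V, (u, v) ∈ A' ↔ (u, v) ∈ N.arcs ∧ σ u = σ v := by
      intro u v; simp [hA']
    have hsame_color : ∀ {a b : V}, (Net.mk A' : Net V).SameTree a b → σ a = σ b := by
      intro a b hst
      induction hst with
      | refl => rfl
      | tail _ h IH =>
        rcases h with h | h
        · exact IH.trans ((hmemA' _ _).mp h).2
        · exact IH.trans ((hmemA' _ _).mp h).2.symm
    have hrooteq : ∀ v : V, (Net.mk A' : Net V).IsRoot v ↔ N.IsRoot v := by
      intro v
      constructor
      · intro h
        by_contra hv
        obtain ⟨u, ⟨hu, hσu⟩, _⟩ := hC1 v hv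
        exact (FBaux.isRoot_iff.mp h u) ((hmemA' u v).mpr ⟨FBaux.mem_parents.mp hu, hσu⟩)
      · intro h
        rw [FBaux.isRoot_iff] at h ⊢
        exact fun u hu => h u ((hmemA' u v).mp hu).1
    refine ⟨A', ⟨Finset.filter_subset _ _, ?_, ?_, ?_⟩, ?_⟩
    · intro v
      rw [Net.inDeg, Finset.card_le_one]
      intro u hu u' hu'
      have hu1 := (hmemA' u v).mp (FBaux.mem_parents.mp hu)
      have hu2 := (hmemA' u' v).mp (FBaux.mem_parents.mp hu')
      by_cases hv : N.IsRoot v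
      · exact absurd hu1.1 (FBaux.isRoot_iff.mp hv u)
      · obtain ⟨w, _, huniq⟩ := hC1 v hv
        rw [huniq u ⟨FBaux.mem_parents.mpr hu1.1, hu1.2⟩,
          huniq u' ⟨FBaux.mem_parents.mpr hu2.1, hu2.2⟩]
    · intro v
      constructor
      · intro h
        by_contra hv
        obtain ⟨u, hu, hσu⟩ := hC2 v hv
        exact (FBaux.isLeaf_iff.mp h u)
          ((hmemA' v u).mpr ⟨FBaux.mem_children.mp hu, hσu.symm⟩)
      · intro h
        rw [FBaux.isLeaf_iff] at h ⊢
        exact fun u hu => h u ((hmemA' v u).mp hu).1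
    · rintro ⟨u, v⟩ ha hna hst
      have : σ u ≠ σ v := fun h => hna ((hmemA' u v).mpr ⟨ha, h⟩)
      exact this (hsame_color hst)
    · have : (Net.mk A' : Net V).roots = N.roots := by
        ext v
        rw [FBaux.mem_roots, FBaux.mem_roots, hrooteq]
      rw [this, hcardN]
end

section
/- Let N = (V,A) be an m-network and σ : V → C an m-coloring satisfying (C1) and (C2). Then the subgraph F' = (V, A') with A' = {(u,v) ∈ A : σ(u) = σ(v)} is a forest (every vertex has indegree at most 1 in F') whose leaf set equals the leaf set of N, and every arc in A \ A' has its endpoints in different connected components of F'. -/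
open Finset

open FB FB.Net in
/-- Given an m-coloring σ of an m-network N satisfying (C1) and (C2),
the monochromatic arcs A' = {(u,v) ∈ A : σ u = σ v} form a subdivision forest:
every vertex has indegree ≤ 1 in (V,A'), its leaf set equals that of N, and
every arc outside A' joins different components. -/
theorem stmt2 {V : Type} [Fintype V] [DecidableEq V] (N : Net V) (m : ℕ)
    (hN : N.IsMNetwork m) {C : Type} [Fintype C] [DecidableEq C]
    (hC : Fintype.card C = m) (σ : V → C) (hsurj : Function.Surjective σ)
    (h1 : N.C1 σ) (h2 : N.C2 σ) :
    N.IsSubdivisionForest (N.arcs.filter (fun a => σ a.1 = σ a.2)) := by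
  set A' := N.arcs.filter (fun a => σ a.1 = σ a.2) with hA'
  have hmem : ∀ u v : V, (u, v) ∈ A' ↔ (u, v) ∈ N.arcs ∧ σ u = σ v := by
    intro u v; simp [hA']
  refine ⟨Finset.filter_subset _ _, ?_, ?_, ?_⟩
  · -- indegree ≤ 1
    intro v
    by_cases hr : N.IsRoot v
    · have hempty : (Net.mk A' : Net V).parents v = ∅ := by
        ext u
        simp only [Net.parents, Finset.mem_filter, Finset.mem_univ, true_and,
          Finset.notMem_empty, iff_false]
        intro h
        have h' := (hmem u v).mp h
        have hpar : u ∈ N.parents v := by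
          simp [Net.parents, h'.1]
        have : N.inDeg v ≠ 0 := Finset.card_ne_zero_of_mem hpar
        exact this hr
      simp [Net.inDeg, hempty]
    · obtain ⟨u, _, huniq⟩ := h1 v hr
      apply Finset.card_le_one.mpr
      intro a ha b hb
      simp only [Net.parents, Finset.mem_filter, Finset.mem_univ, true_and] at ha hb
      have ha' := (hmem a v).mp ha
      have hb' := (hmem b v).mp hb
      have haa : a = u := huniq a ⟨by simp [Net.parents, ha'.1], ha'.2⟩
      have hbb : b = u := huniq b ⟨by simp [Net.parents, hb'.1], hb'.2⟩
      rw [haa, hbb]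
  · -- leaves
    intro v
    constructor
    · intro hl
      by_contra hNl
      obtain ⟨c, hc, hcc⟩ := h2 v hNl
      simp only [Net.children, Finset.mem_filter, Finset.mem_univ, true_and] at hc
      have : c ∈ (Net.mk A' : Net V).children v := by
        simp only [Net.children, Finset.mem_filter, Finset.mem_univ, true_and]
        exact (hmem v c).mpr ⟨hc, hcc.symm⟩
      have : (Net.mk A' : Net V).outDeg v ≠ 0 := Finset.card_ne_zero_of_mem this
      exact this hl
    · intro hNl
      have hempty : (Net.mk A' : Net V).children v = ∅ := by
        ext c
        simp only [Net.children, Finset.mem_filter, Finset.mem_univ, true_and,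
          Finset.notMem_empty, iff_false]
        intro h
        have h' := (hmem v c).mp h
        have : c ∈ N.children v := by simp [Net.children, h'.1]
        have : N.outDeg v ≠ 0 := Finset.card_ne_zero_of_mem this
        exact this hNl
      simp [Net.IsLeaf, Net.outDeg, hempty]
  · -- arcs outside A' join different trees
    rintro ⟨u, v⟩ ha hnot hst
    have hcol : ∀ {a b : V}, (Net.mk A' : Net V).SameTree a b → σ a = σ b := by
      intro a b h
      induction h with
      | refl => rfl
      | tail _ hstep ih =>
        rcases hstep with h | h
        · exact ih.trans ((hmem _ _).mp h).2
        · exact ih.trans ((hmem _ _).mp h).2.symm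
    exact hnot ((hmem u v).mpr ⟨ha, hcol hst⟩)
end

section
/- Let N be an m-network and F' a subdivision forest witnessing that N is proper forest-based (so F' has exactly m trees). Then the map σ assigning to each vertex v of N the tree of F' containing v is an m-coloring of N satisfying (C1) and (C2): every non-root vertex of N has exactly one parent in the same tree, and every internal vertex of N has at least one child in the same tree. -/
open Finset

open FB FB.Net in
/-- If F' = (V,A') is a subdivision forest of an m-network N with
exactly m trees, then the coloring of vertices by their tree satisfies (C1) and (C2):
every non-root vertex of N has exactly one parent in the same tree of F', and every
internal vertex of N has at least one child in the same tree of F'. -/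
theorem stmt3 {V : Type} [Fintype V] [DecidableEq V] (N : Net V) (m : ℕ)
    (hN : N.IsMNetwork m) (A' : Finset (V × V)) (hF : N.IsSubdivisionForest A')
    (hm : (Net.mk A' : Net V).roots.card = m) :
    (∀ v, ¬ N.IsRoot v → ∃! u, u ∈ N.parents v ∧ (Net.mk A' : Net V).SameTree u v) ∧
    (∀ v, ¬ N.IsLeaf v → ∃ u ∈ N.children v, (Net.mk A' : Net V).SameTree u v) := by
  obtain ⟨hsub, hdeg, hleaf, hcross⟩ := hF
  set F : Net V := Net.mk A' with hFdef
  have hrsub : N.roots ⊆ F.roots := by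
    intro v hv
    simp only [roots, IsRoot, mem_filter, mem_univ, true_and] at hv ⊢
    have hps : F.parents v ⊆ N.parents v := by
      intro u hu
      simp only [parents, mem_filter, mem_univ, true_and] at hu ⊢
      exact hsub hu
    have := card_le_card hps
    unfold inDeg at hv ⊢
    have h0 : (N.parents v).card = 0 := by simpa using hv
    have h1 : (F.parents v).card = 0 := by omega
    simpa using h1
  have hreq : N.roots = F.roots := eq_of_subset_of_card_le hrsub (by rw [hm, hN.2])
  constructor
  · intro v hv
    have hvF : ¬ F.IsRoot v := by
      intro h
      apply hv
      have hmem : v ∈ F.roots := by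
        simp only [roots, mem_filter, mem_univ, true_and]; exact h
      rw [← hreq] at hmem
      simpa only [roots, mem_filter, mem_univ, true_and] using hmem
    have h1 : F.inDeg v = 1 := by
      have := hdeg v
      unfold IsRoot at hvF
      omega
    obtain ⟨u, hu⟩ := card_eq_one.mp h1
    have huA : (u, v) ∈ A' := by
      have : u ∈ F.parents v := hu ▸ mem_singleton_self u
      simpa only [parents, mem_filter, mem_univ, true_and] using this
    refine ⟨u, ⟨?_, Relation.ReflTransGen.single (Or.inl huA)⟩, ?_⟩
    · simp only [parents, mem_filter, mem_univ, true_and]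
      exact hsub huA
    · rintro u' ⟨hu'p, hst⟩
      simp only [parents, mem_filter, mem_univ, true_and] at hu'p
      by_cases hA : (u', v) ∈ A'
      · have : u' ∈ F.parents v := by
          simp only [parents, mem_filter, mem_univ, true_and]; exact hA
        rw [hu] at this
        simpa using this
      · exact absurd hst (hcross (u', v) hu'p hA)
  · intro v hv
    have hnl : ¬ F.IsLeaf v := fun h => hv ((hleaf v).mp h)
    unfold IsLeaf outDeg at hnl
    obtain ⟨u, hu⟩ := card_pos.mp (Nat.pos_of_ne_zero hnl)
    simp only [children, mem_filter, mem_univ, true_and] at hu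
    refine ⟨u, ?_, Relation.ReflTransGen.single (Or.inr hu)⟩
    simp only [children, mem_filter, mem_univ, true_and]
    exact hsub hu
end

section
/- Let N be a proper forest-based m-network (m ≥ 2) and v a reticulation of N with indegree at least 3 and unique child c. Then there exists a parent p of v such that the network N' obtained from N by adding new vertices v1, v2, x_v, deleting arcs (p,v) and (v,c), and adding arcs (v,v1), (v1,v2), (v2,c), (v1,x_v), (p,v2), is again a proper forest-based m-network. -/
open Finset

section Aux
open FB FB.Net Finset

namespace FB.Net

variable {V : Type} [Fintype V] [DecidableEq V]

lemma mem_resolve (N : Net V) (p v c : V) (x y : V ⊕ Fin 3) :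
    (x, y) ∈ (N.resolve p v c).arcs ↔
      (∃ a b, (a, b) ∈ N.arcs ∧ ¬(a = p ∧ b = v) ∧ ¬(a = v ∧ b = c) ∧
        x = Sum.inl a ∧ y = Sum.inl b) ∨
      (x = Sum.inl v ∧ y = Sum.inr 0) ∨ (x = Sum.inr 0 ∧ y = Sum.inr 1) ∨
      (x = Sum.inr 1 ∧ y = Sum.inl c) ∨ (x = Sum.inr 0 ∧ y = Sum.inr 2) ∨
      (x = Sum.inl p ∧ y = Sum.inr 1) := by
  simp only [resolve, Finset.mem_union, Finset.mem_image, Finset.mem_erase, Finset.mem_insert,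
    Finset.mem_singleton, Prod.ext_iff, Prod.mk.injEq]
  constructor
  · rintro (⟨⟨a, b⟩, ⟨h2, h1, hab⟩, hx, hy⟩ | h)
    · exact Or.inl ⟨a, b, hab, fun ⟨ha, hb⟩ => h1 (by simp [ha, hb]),
        fun ⟨ha, hb⟩ => h2 (by simp [ha, hb]), hx.symm, hy.symm⟩
    · tauto
  · rintro (⟨a, b, hab, h1, h2, hx, hy⟩ | h)
    · exact Or.inl ⟨⟨a, b⟩, ⟨by simpa using fun ha hb => h2 ⟨ha, hb⟩,
        by simpa using fun ha hb => h1 ⟨ha, hb⟩, hab⟩, hx.symm, hy.symm⟩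
    · tauto

set_option linter.unusedSectionVars false

variable {N : Net V} {p v c : V}

lemma resolve_parents_inl (a : V) (hav : a ≠ v) (hac : a ≠ c) :
    (N.resolve p v c).parents (Sum.inl a) = (N.parents a).image Sum.inl := by
  ext x
  simp only [parents, Finset.mem_filter, Finset.mem_univ, true_and, mem_resolve,
    Finset.mem_image]
  constructor
  · rintro (⟨a', b, hab, h1, h2, hx, hb⟩ | ⟨hx, hy⟩ | ⟨hx, hy⟩ | ⟨hx, hy⟩ | ⟨hx, hy⟩ | ⟨hx, hy⟩)
    · obtain rfl : b = a := by simpa using hb.symm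
      exact ⟨a', hab, hx.symm⟩
    all_goals simp_all
  · rintro ⟨u, hu, rfl⟩
    exact Or.inl ⟨u, a, hu, fun h => hav h.2, fun h => hac h.2, rfl, rfl⟩

lemma resolve_parents_v (hvc : v ≠ c) :
    (N.resolve p v c).parents (Sum.inl v) = ((N.parents v).erase p).image Sum.inl := by
  ext x
  simp only [parents, Finset.mem_filter, Finset.mem_univ, true_and, mem_resolve,
    Finset.mem_image, Finset.mem_erase]
  constructor
  · rintro (⟨a', b, hab, h1, h2, hx, hb⟩ | ⟨hx, hy⟩ | ⟨hx, hy⟩ | ⟨hx, hy⟩ | ⟨hx, hy⟩ | ⟨hx, hy⟩)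
    · obtain rfl : b = v := by simpa using hb.symm
      exact ⟨a', ⟨fun hp => h1 ⟨hp, rfl⟩, hab⟩, hx.symm⟩
    all_goals simp_all
  · rintro ⟨u, ⟨hup, hu⟩, rfl⟩
    exact Or.inl ⟨u, v, hu, fun h => hup h.1, fun h => hvc h.2, rfl, rfl⟩

lemma resolve_parents_c (hvc : v ≠ c) :
    (N.resolve p v c).parents (Sum.inl c) =
      ((N.parents c).erase v).image Sum.inl ∪ {Sum.inr 1} := by
  ext x
  simp only [parents, Finset.mem_filter, Finset.mem_univ, true_and, mem_resolve,
    Finset.mem_image, Finset.mem_erase, Finset.mem_union, Finset.mem_singleton]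
  constructor
  · rintro (⟨a', b, hab, h1, h2, hx, hb⟩ | ⟨hx, hy⟩ | ⟨hx, hy⟩ | ⟨hx, hy⟩ | ⟨hx, hy⟩ | ⟨hx, hy⟩)
    · obtain rfl : b = c := by simpa using hb.symm
      exact Or.inl ⟨a', ⟨fun hq => h2 ⟨hq, rfl⟩, hab⟩, hx.symm⟩
    all_goals simp_all
  · rintro (⟨u, ⟨huv, hu⟩, rfl⟩ | rfl)
    · exact Or.inl ⟨u, c, hu, fun h => hvc (h.2.symm), fun h => huv h.1, rfl, rfl⟩
    · simp

lemma resolve_parents_r0 :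
    (N.resolve p v c).parents (Sum.inr 0) = {Sum.inl v} := by
  ext x
  simp only [parents, Finset.mem_filter, Finset.mem_univ, true_and, mem_resolve,
    Finset.mem_singleton]
  constructor
  · rintro (⟨a', b, hab, h1, h2, hx, hb⟩ | ⟨hx, hy⟩ | ⟨hx, hy⟩ | ⟨hx, hy⟩ | ⟨hx, hy⟩ | ⟨hx, hy⟩)
    all_goals simp_all
  · rintro rfl; tauto

lemma resolve_parents_r1 :
    (N.resolve p v c).parents (Sum.inr 1) = {Sum.inr 0, Sum.inl p} := by
  ext x
  simp only [parents, Finset.mem_filter, Finset.mem_univ, true_and, mem_resolve,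
    Finset.mem_insert, Finset.mem_singleton]
  constructor
  · rintro (⟨a', b, hab, h1, h2, hx, hb⟩ | ⟨hx, hy⟩ | ⟨hx, hy⟩ | ⟨hx, hy⟩ | ⟨hx, hy⟩ | ⟨hx, hy⟩)
    all_goals simp_all
  · rintro (rfl | rfl) <;> tauto

lemma resolve_parents_r2 :
    (N.resolve p v c).parents (Sum.inr 2) = {Sum.inr 0} := by
  ext x
  simp only [parents, Finset.mem_filter, Finset.mem_univ, true_and, mem_resolve,
    Finset.mem_singleton]
  constructor
  · rintro (⟨a', b, hab, h1, h2, hx, hb⟩ | ⟨hx, hy⟩ | ⟨hx, hy⟩ | ⟨hx, hy⟩ | ⟨hx, hy⟩ | ⟨hx, hy⟩)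
    all_goals simp_all
  · rintro rfl; tauto

lemma resolve_children_inl (a : V) (hap : a ≠ p) (hav : a ≠ v) :
    (N.resolve p v c).children (Sum.inl a) = (N.children a).image Sum.inl := by
  ext x
  simp only [children, Finset.mem_filter, Finset.mem_univ, true_and, mem_resolve,
    Finset.mem_image]
  constructor
  · rintro (⟨a', b, hab, h1, h2, hx, hb⟩ | ⟨hx, hy⟩ | ⟨hx, hy⟩ | ⟨hx, hy⟩ | ⟨hx, hy⟩ | ⟨hx, hy⟩)
    · obtain rfl : a' = a := by simpa using hx.symm
      exact ⟨b, hab, hb.symm⟩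
    all_goals simp_all
  · rintro ⟨u, hu, rfl⟩
    exact Or.inl ⟨a, u, hu, fun h => hap h.1, fun h => hav h.1, rfl, rfl⟩

lemma resolve_children_p (hpv : p ≠ v) :
    (N.resolve p v c).children (Sum.inl p) =
      ((N.children p).erase v).image Sum.inl ∪ {Sum.inr 1} := by
  ext x
  simp only [children, Finset.mem_filter, Finset.mem_univ, true_and, mem_resolve,
    Finset.mem_image, Finset.mem_erase, Finset.mem_union, Finset.mem_singleton]
  constructor
  · rintro (⟨a', b, hab, h1, h2, hx, hb⟩ | ⟨hx, hy⟩ | ⟨hx, hy⟩ | ⟨hx, hy⟩ | ⟨hx, hy⟩ | ⟨hx, hy⟩)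
    · obtain rfl : a' = p := by simpa using hx.symm
      exact Or.inl ⟨b, ⟨fun hb' => h1 ⟨rfl, hb'⟩, hab⟩, hb.symm⟩
    all_goals simp_all
  · rintro (⟨u, ⟨huv, hu⟩, rfl⟩ | rfl)
    · exact Or.inl ⟨p, u, hu, fun h => huv h.2, fun h => hpv h.1, rfl, rfl⟩
    · tauto

lemma resolve_children_v (hpv : p ≠ v) :
    (N.resolve p v c).children (Sum.inl v) =
      ((N.children v).erase c).image Sum.inl ∪ {Sum.inr 0} := by
  ext x
  simp only [children, Finset.mem_filter, Finset.mem_univ, true_and, mem_resolve,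
    Finset.mem_image, Finset.mem_erase, Finset.mem_union, Finset.mem_singleton]
  constructor
  · rintro (⟨a', b, hab, h1, h2, hx, hb⟩ | ⟨hx, hy⟩ | ⟨hx, hy⟩ | ⟨hx, hy⟩ | ⟨hx, hy⟩ | ⟨hx, hy⟩)
    · obtain rfl : a' = v := by simpa using hx.symm
      exact Or.inl ⟨b, ⟨fun hb' => h2 ⟨rfl, hb'⟩, hab⟩, hb.symm⟩
    all_goals simp_all
  · rintro (⟨u, ⟨huc, hu⟩, rfl⟩ | rfl)
    · exact Or.inl ⟨v, u, hu, fun h => hpv h.1.symm, fun h => huc h.2, rfl, rfl⟩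
    · tauto

lemma resolve_children_r0 :
    (N.resolve p v c).children (Sum.inr 0) = {Sum.inr 1, Sum.inr 2} := by
  ext x
  simp only [children, Finset.mem_filter, Finset.mem_univ, true_and, mem_resolve,
    Finset.mem_insert, Finset.mem_singleton]
  constructor
  · rintro (⟨a', b, hab, h1, h2, hx, hb⟩ | ⟨hx, hy⟩ | ⟨hx, hy⟩ | ⟨hx, hy⟩ | ⟨hx, hy⟩ | ⟨hx, hy⟩)
    all_goals simp_all
  · rintro (rfl | rfl) <;> tauto

lemma resolve_children_r1 :
    (N.resolve p v c).children (Sum.inr 1) = {Sum.inl c} := by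
  ext x
  simp only [children, Finset.mem_filter, Finset.mem_univ, true_and, mem_resolve,
    Finset.mem_singleton]
  constructor
  · rintro (⟨a', b, hab, h1, h2, hx, hb⟩ | ⟨hx, hy⟩ | ⟨hx, hy⟩ | ⟨hx, hy⟩ | ⟨hx, hy⟩ | ⟨hx, hy⟩)
    all_goals simp_all
  · rintro rfl; tauto

lemma resolve_children_r2 :
    (N.resolve p v c).children (Sum.inr 2) = ∅ := by
  ext x
  simp only [children, Finset.mem_filter, Finset.mem_univ, true_and, mem_resolve,
    Finset.notMem_empty, iff_false]
  rintro (⟨a', b, hab, h1, h2, hx, hb⟩ | ⟨hx, hy⟩ | ⟨hx, hy⟩ | ⟨hx, hy⟩ | ⟨hx, hy⟩ | ⟨hx, hy⟩)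
  all_goals simp_all

lemma exists_rank (N : Net V) (h : N.Acyclic) : ∃ g : V → ℕ, ∀ a b, N.Arc a b → g a < g b := by
  classical
  refine ⟨fun a => {u | Relation.TransGen N.Arc u a}.ncard, fun a b hab => ?_⟩
  apply Set.ncard_lt_ncard _ (Set.toFinite _)
  constructor
  · intro u hu
    exact Relation.TransGen.tail hu hab
  · intro hsub
    exact h a (hsub (Relation.TransGen.single hab))

lemma acyclic_of_rank (N : Net V) (g : V → ℕ) (hg : ∀ a b, N.Arc a b → g a < g b) :
    N.Acyclic := by
  have key : ∀ x y, Relation.TransGen N.Arc x y → g x < g y := by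
    intro x y h
    induction h with
    | single h => exact hg _ _ h
    | tail _ h ih => exact ih.trans (hg _ _ h)
  exact fun x hx => lt_irrefl _ (key x x hx)

lemma rtg_lift {α β : Type*} {r : α → α → Prop} {s : β → β → Prop} (f : α → β)
    (hf : ∀ a b, r a b → Relation.ReflTransGen s (f a) (f b)) {a b : α}
    (h : Relation.ReflTransGen r a b) : Relation.ReflTransGen s (f a) (f b) := by
  induction h with
  | refl => exact Relation.ReflTransGen.refl
  | tail _ h ih => exact ih.trans (hf _ _ h)

lemma sameTree_symm (M : Net V) {x y : V} (h : M.SameTree x y) : M.SameTree y x :=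
  (@Relation.ReflTransGen.symmetric _ _ ⟨fun _ _ h => h.symm⟩).symm _ _ h

lemma mk_erase_parents (E : Finset (V × V)) (u w x : V) :
    (Net.mk (E.erase (u, w))).parents x =
      if x = w then ((Net.mk E : Net V).parents x).erase u else (Net.mk E : Net V).parents x := by
  ext y
  by_cases hx : x = w <;>
    simp [parents, hx, Finset.mem_erase, Prod.ext_iff, and_assoc, and_comm, or_comm] <;>
    tauto

lemma mk_erase_children (E : Finset (V × V)) (u w x : V) :
    (Net.mk (E.erase (u, w))).children x =
      if x = u then ((Net.mk E : Net V).children x).erase w else (Net.mk E : Net V).children x := by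
  ext y
  by_cases hx : x = u <;>
    simp [children, hx, Finset.mem_erase, Prod.ext_iff, and_assoc, and_comm, or_comm] <;>
    tauto
end FB.Net
end Aux

set_option maxHeartbeats 1000000 in

open FB FB.Net in
/-- If N is a proper forest-based m-network (m ≥ 2) and v is a
reticulation of indegree ≥ 3 with unique child c, then there is a parent p of v
such that the resolved network N' is again a proper forest-based m-network. -/
theorem stmt4 {V : Type} [Fintype V] [DecidableEq V] (N : Net V) (m : ℕ)
    (hm : 2 ≤ m) (hN : N.IsMNetwork m) (hfb : N.ProperForestBased m)
    (v c : V) (hv : N.IsRetic v) (hdeg : 3 ≤ N.inDeg v) (hc : N.children v = {c}) :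
    ∃ p ∈ N.parents v,
      (N.resolve p v c).IsMNetwork m ∧ (N.resolve p v c).ProperForestBased m := by
  classical
  obtain ⟨⟨hac, hconn, hleafdeg, hrootdeg, hretout, h11⟩, hroots⟩ := hN
  obtain ⟨A', ⟨hsub, hin1, hleafiff, hcross⟩, hAroots⟩ := hfb
  -- basic arcs and distinctness
  have hvc_arc : (v, c) ∈ N.arcs := by
    have : c ∈ N.children v := by rw [hc]; exact Finset.mem_singleton_self c
    simpa [children] using this
  have hvcne : v ≠ c := by
    intro h
    exact hac v (Relation.TransGen.single (show N.Arc v v by rw [Arc]; nth_rewrite 2 [h]; exact hvc_arc))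
  -- (v,c) ∈ A'
  have hvnotleaf : ¬ N.IsLeaf v := by
    simp [IsLeaf, outDeg, hc]
  have hvcA : (v, c) ∈ A' := by
    have h1 : ¬ (Net.mk A' : Net V).IsLeaf v := fun h => hvnotleaf ((hleafiff v).mp h)
    have h2 : ((Net.mk A' : Net V).children v).Nonempty := by
      rw [Finset.nonempty_iff_ne_empty]
      intro h
      exact h1 (by simp [IsLeaf, outDeg, h])
    obtain ⟨w, hw⟩ := h2
    have hwA : (v, w) ∈ A' := by simpa [children] using hw
    have : w ∈ N.children v := by simp [children, hsub hwA]
    rw [hc, Finset.mem_singleton] at this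
    rwa [this] at hwA
  -- choose p
  have hex : ∃ p ∈ N.parents v, (p, v) ∉ A' := by
    by_contra h
    push_neg at h
    have hss : N.parents v ⊆ (Net.mk A' : Net V).parents v := by
      intro u hu
      have := h u hu
      simp only [parents, Finset.mem_filter, Finset.mem_univ, true_and] at hu ⊢
      exact this
    have := (Finset.card_le_card hss).trans (hin1 v)
    rw [inDeg] at hdeg
    omega
  obtain ⟨p, hpv, hpA⟩ := hex
  have hpv_arc : (p, v) ∈ N.arcs := by simpa [parents] using hpv
  have hpvne : p ≠ v := by
    intro h
    exact hac v (Relation.TransGen.single (show N.Arc v v by rw [Arc]; nth_rewrite 1 [← h]; exact hpv_arc))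
  have hpcne : p ≠ c := by
    intro h
    refine hac v (Relation.TransGen.tail (Relation.TransGen.single (show N.Arc v c from hvc_arc)) ?_)
    show N.Arc c v
    rw [Arc, ← h]; exact hpv_arc
  have hcvne : c ≠ v := fun h => hvcne h.symm
  have hvpne : v ≠ p := fun h => hpvne h.symm
  have hcpne : c ≠ p := fun h => hpcne h.symm
  -- membership facts
  have hv_child_p : v ∈ N.children p := by simp [children, hpv_arc]
  have hv_parent_c : v ∈ N.parents c := by simp [parents, hvc_arc]
  have hp_parent_v : p ∈ N.parents v := hpv
  -- degree computations in N'
  have hin_inl : ∀ a : V, a ≠ v → a ≠ c → (N.resolve p v c).inDeg (Sum.inl a) = N.inDeg a := by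
    intro a h1 h2
    rw [inDeg, resolve_parents_inl a h1 h2, Finset.card_image_of_injective _ Sum.inl_injective]
    rfl
  have hin_v : (N.resolve p v c).inDeg (Sum.inl v) = N.inDeg v - 1 := by
    rw [inDeg, resolve_parents_v hvcne, Finset.card_image_of_injective _ Sum.inl_injective,
      Finset.card_erase_of_mem hp_parent_v]
    rfl
  have hdisj : ∀ (s : Finset V), Disjoint (s.image (Sum.inl : V → V ⊕ Fin 3)) {Sum.inr 1} := by
    intro s
    simp [Finset.disjoint_left]
  have hin_c : (N.resolve p v c).inDeg (Sum.inl c) = N.inDeg c := by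
    rw [inDeg, resolve_parents_c hvcne, Finset.card_union_of_disjoint (hdisj _),
      Finset.card_image_of_injective _ Sum.inl_injective, Finset.card_erase_of_mem hv_parent_c,
      Finset.card_singleton]
    have : 1 ≤ (N.parents c).card := Finset.card_pos.mpr ⟨v, hv_parent_c⟩
    rw [inDeg]
    omega
  have hin_r0 : (N.resolve p v c).inDeg (Sum.inr 0) = 1 := by
    rw [inDeg, resolve_parents_r0]; rfl
  have hin_r1 : (N.resolve p v c).inDeg (Sum.inr 1) = 2 := by
    rw [inDeg, resolve_parents_r1]
    simp
  have hin_r2 : (N.resolve p v c).inDeg (Sum.inr 2) = 1 := by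
    rw [inDeg, resolve_parents_r2]; rfl
  have hout_inl : ∀ a : V, a ≠ p → a ≠ v → (N.resolve p v c).outDeg (Sum.inl a) = N.outDeg a := by
    intro a h1 h2
    rw [outDeg, resolve_children_inl a h1 h2, Finset.card_image_of_injective _ Sum.inl_injective]
    rfl
  have hdisj0 : ∀ (s : Finset V), Disjoint (s.image (Sum.inl : V → V ⊕ Fin 3)) {Sum.inr 0} := by
    intro s
    simp [Finset.disjoint_left]
  have hout_p : (N.resolve p v c).outDeg (Sum.inl p) = N.outDeg p := by
    rw [outDeg, resolve_children_p hpvne, Finset.card_union_of_disjoint (hdisj _),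
      Finset.card_image_of_injective _ Sum.inl_injective, Finset.card_erase_of_mem hv_child_p,
      Finset.card_singleton]
    have : 1 ≤ (N.children p).card := Finset.card_pos.mpr ⟨v, hv_child_p⟩
    rw [outDeg]
    omega
  have hout_v : (N.resolve p v c).outDeg (Sum.inl v) = 1 := by
    rw [outDeg, resolve_children_v hpvne, hc]
    simp
  have hout_r0 : (N.resolve p v c).outDeg (Sum.inr 0) = 2 := by
    rw [outDeg, resolve_children_r0]
    simp
  have hout_r1 : (N.resolve p v c).outDeg (Sum.inr 1) = 1 := by
    rw [outDeg, resolve_children_r1]; rfl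
  have hout_r2 : (N.resolve p v c).outDeg (Sum.inr 2) = 0 := by
    rw [outDeg, resolve_children_r2]; rfl
  have houtv1 : N.outDeg v = 1 := by simp [outDeg, hc]
  have hfin3 : ∀ i : Fin 3, i = 0 ∨ i = 1 ∨ i = 2 := by decide
  have hrootiff : ∀ x : V ⊕ Fin 3, (N.resolve p v c).IsRoot x ↔ ∃ a, N.IsRoot a ∧ x = Sum.inl a := by
    rintro (a | i)
    · by_cases hav : a = v
      · constructor
        · intro h; rw [IsRoot, hav, hin_v] at h; omega
        · rintro ⟨b, hb, h⟩
          obtain rfl : a = b := by simpa using h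
          rw [IsRoot, hav] at hb; omega
      · by_cases hac2 : a = c
        · have hcind : N.inDeg c ≠ 0 := by
            have : 0 < (N.parents c).card := Finset.card_pos.mpr ⟨v, hv_parent_c⟩
            rw [inDeg]; omega
          constructor
          · intro h; rw [IsRoot, hac2, hin_c] at h; exact absurd h hcind
          · rintro ⟨b, hb, h⟩
            obtain rfl : a = b := by simpa using h
            rw [IsRoot, hac2] at hb; exact absurd hb hcind
        · rw [IsRoot, hin_inl a hav hac2]
          constructor
          · intro h; exact ⟨a, h, rfl⟩
          · rintro ⟨b, hb, h⟩
            obtain rfl : a = b := by simpa using h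
            exact hb
    · rcases hfin3 i with rfl | rfl | rfl <;>
        simp only [IsRoot, hin_r0, hin_r1, hin_r2] <;>
        constructor <;> first
          | (intro h; omega)
          | (rintro ⟨b, hb, h⟩; simp at h)
  refine ⟨p, hpv, ⟨⟨?_, ?_, ?_, ?_, ?_, ?_⟩, ?_⟩, ?_⟩
  · -- Acyclic
    obtain ⟨g, hg⟩ := exists_rank N hac
    apply acyclic_of_rank _ (Sum.elim (fun a => 4 * g a) (fun i => 4 * g v + 1 + i.val))
    intro x y hxy
    rw [Arc, mem_resolve] at hxy
    rcases hxy with ⟨a, b, hab, _, _, rfl, rfl⟩ | ⟨rfl, rfl⟩ | ⟨rfl, rfl⟩ | ⟨rfl, rfl⟩ |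
      ⟨rfl, rfl⟩ | ⟨rfl, rfl⟩
    · have := hg a b hab; simp only [Sum.elim_inl]; omega
    · simp
    · simp
    · have := hg v c hvc_arc; simp only [Sum.elim_inl, Sum.elim_inr]
      have h2 : ((1 : Fin 3) : ℕ) = 1 := rfl
      omega
    · simp
    · have := hg p v hpv_arc; simp only [Sum.elim_inl, Sum.elim_inr]
      have h2 : ((1 : Fin 3) : ℕ) = 1 := rfl
      omega
  · -- Connected
    have s1 : (N.resolve p v c).Arc (Sum.inl p) (Sum.inr 1) := by
      rw [Arc, mem_resolve]; exact Or.inr (Or.inr (Or.inr (Or.inr (Or.inr ⟨rfl, rfl⟩))))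
    have s2 : (N.resolve p v c).Arc (Sum.inr 0) (Sum.inr 1) := by
      rw [Arc, mem_resolve]; exact Or.inr (Or.inr (Or.inl ⟨rfl, rfl⟩))
    have s3 : (N.resolve p v c).Arc (Sum.inl v) (Sum.inr 0) := by
      rw [Arc, mem_resolve]; exact Or.inr (Or.inl ⟨rfl, rfl⟩)
    have s4 : (N.resolve p v c).Arc (Sum.inr 1) (Sum.inl c) := by
      rw [Arc, mem_resolve]; exact Or.inr (Or.inr (Or.inr (Or.inl ⟨rfl, rfl⟩)))
    have s5 : (N.resolve p v c).Arc (Sum.inr 0) (Sum.inr 2) := by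
      rw [Arc, mem_resolve]; exact Or.inr (Or.inr (Or.inr (Or.inr (Or.inl ⟨rfl, rfl⟩))))
    set R' : (V ⊕ Fin 3) → (V ⊕ Fin 3) → Prop :=
      fun x y => (N.resolve p v c).Arc x y ∨ (N.resolve p v c).Arc y x with hR'
    have hRsym : ∀ {x y}, Relation.ReflTransGen R' x y → Relation.ReflTransGen R' y x :=
      fun h => (@Relation.ReflTransGen.symmetric _ _ ⟨fun _ _ h => h.symm⟩).symm _ _ h
    have base : ∀ a b : V, N.Arc a b →
        Relation.ReflTransGen R' (Sum.inl a) (Sum.inl b) := by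
      intro a b hab
      by_cases h1 : a = p ∧ b = v
      · obtain ⟨rfl, rfl⟩ := h1
        exact .trans (.single (Or.inl s1)) (.trans (.single (Or.inr s2)) (.single (Or.inr s3)))
      · by_cases h2 : a = v ∧ b = c
        · obtain ⟨rfl, rfl⟩ := h2
          exact .trans (.single (Or.inl s3)) (.trans (.single (Or.inl s2)) (.single (Or.inl s4)))
        · exact .single (Or.inl (by rw [Arc, mem_resolve]; exact Or.inl ⟨a, b, hab, h1, h2, rfl, rfl⟩))
    have basere : ∀ a b : V, (N.Arc a b ∨ N.Arc b a) →
        Relation.ReflTransGen R' (Sum.inl a) (Sum.inl b) := by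
      rintro a b (h | h)
      · exact base a b h
      · exact hRsym (base b a h)
    have hmain : ∀ a b : V, Relation.ReflTransGen R' (Sum.inl a) (Sum.inl b) :=
      fun a b => rtg_lift Sum.inl basere (hconn a b)
    have tobase : ∀ x : V ⊕ Fin 3,
        Relation.ReflTransGen R' x (Sum.inl (Sum.elim id (fun _ => v) x)) := by
      rintro (a | i)
      · exact .refl
      · rcases hfin3 i with rfl | rfl | rfl
        · exact .single (Or.inr s3)
        · exact .trans (.single (Or.inr s2)) (.single (Or.inr s3))
        · exact .trans (.single (Or.inr s5)) (.single (Or.inr s3))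
    intro x y
    exact ((tobase x).trans (hmain _ _)).trans (hRsym (tobase y))
  · -- leaves have indegree 1
    rintro (a | i) hL
    · by_cases hap : a = p
      · exfalso
        have : 0 < N.outDeg p := Finset.card_pos.mpr ⟨v, hv_child_p⟩
        rw [IsLeaf, hap, hout_p] at hL; omega
      · by_cases hav : a = v
        · rw [IsLeaf, hav, hout_v] at hL; omega
        · have hNleaf : N.IsLeaf a := by rw [IsLeaf, ← hout_inl a hap hav]; exact hL
          have hd := hleafdeg a hNleaf
          by_cases hac2 : a = c
          · rw [hac2, hin_c, ← hac2]; exact hd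
          · rw [hin_inl a hav hac2]; exact hd
    · rcases hfin3 i with rfl | rfl | rfl
      · rw [IsLeaf, hout_r0] at hL; omega
      · rw [IsLeaf, hout_r1] at hL; omega
      · exact hin_r2
  · -- roots have outdegree ≥ 2
    intro x hx
    obtain ⟨a, ha, rfl⟩ := (hrootiff x).mp hx
    have hav : a ≠ v := by
      intro h; rw [IsRoot, h] at ha; omega
    by_cases hap : a = p
    · rw [hap, hout_p]; exact hrootdeg p (hap ▸ ha)
    · rw [hout_inl a hap hav]; exact hrootdeg a ha
  · -- retics have outdegree 1
    rintro (a | i) hx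
    · by_cases hav : a = v
      · rw [hav]; exact hout_v
      · by_cases hac2 : a = c
        · have hrc : N.IsRetic c := by rw [IsRetic, ← hin_c]; exact hac2 ▸ hx
          rw [hac2, hout_inl c hcpne hcvne]; exact hretout c hrc
        · have hra : N.IsRetic a := by rw [IsRetic, ← hin_inl a hav hac2]; exact hx
          by_cases hap : a = p
          · rw [hap, hout_p]; exact hretout p (hap ▸ hra)
          · rw [hout_inl a hap hav]; exact hretout a hra
    · rcases hfin3 i with rfl | rfl | rfl
      · rw [IsRetic, hin_r0] at hx; omega
      · exact hout_r1
      · rw [IsRetic, hin_r2] at hx; omega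
  · -- no (1,1)
    rintro (a | i) ⟨h1, h2⟩
    · by_cases hav : a = v
      · rw [hav, hin_v] at h1; omega
      · by_cases hac2 : a = c
        · rw [hac2, hin_c] at h1; rw [hac2, hout_inl c hcpne hcvne] at h2
          exact h11 c ⟨h1, h2⟩
        · rw [hin_inl a hav hac2] at h1
          by_cases hap : a = p
          · rw [hap, hout_p] at h2; exact h11 p ⟨hap ▸ h1, h2⟩
          · rw [hout_inl a hap hav] at h2; exact h11 a ⟨h1, h2⟩
    · rcases hfin3 i with rfl | rfl | rfl
      · rw [hout_r0] at h2; omega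
      · rw [hin_r1] at h1; omega
      · rw [hout_r2] at h2; omega
  · -- roots card
    have heq : (N.resolve p v c).roots = N.roots.image Sum.inl := by
      ext x
      simp only [roots, Finset.mem_filter, Finset.mem_univ, true_and, Finset.mem_image]
      rw [hrootiff]
      constructor
      · rintro ⟨a, ha, rfl⟩; exact ⟨a, ha, rfl⟩
      · rintro ⟨a, ha, rfl⟩; exact ⟨a, ha, rfl⟩
    rw [heq, Finset.card_image_of_injective _ Sum.inl_injective]
    exact hroots
  · -- ProperForestBased
    set A2 : Finset ((V ⊕ Fin 3) × (V ⊕ Fin 3)) :=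
      ((Net.mk A' : Net V).resolve p v c).arcs.erase (Sum.inl p, Sum.inr 1) with hA2
    have hAvparent_c : v ∈ (Net.mk A' : Net V).parents c := by
      simp [parents, Arc]; exact hvcA
    have hAparents_c : (Net.mk A' : Net V).parents c = {v} := by
      apply Finset.eq_singleton_iff_unique_mem.mpr
      refine ⟨hAvparent_c, fun x hx => ?_⟩
      have h1 := hin1 c
      rw [inDeg] at h1
      exact Finset.card_le_one.mp h1 x hx v hAvparent_c
    have hApnotparent : p ∉ (Net.mk A' : Net V).parents v := by
      simp [parents]; exact hpA
    have hAvnotchild_p : v ∉ (Net.mk A' : Net V).children p := by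
      simp [children]; exact hpA
    have hP : ∀ x, (Net.mk A2 : Net (V ⊕ Fin 3)).parents x =
        if x = Sum.inr 1 then
          (((Net.mk A' : Net V).resolve p v c).parents x).erase (Sum.inl p)
        else ((Net.mk A' : Net V).resolve p v c).parents x :=
      fun x => mk_erase_parents _ _ _ x
    have hC : ∀ x, (Net.mk A2 : Net (V ⊕ Fin 3)).children x =
        if x = Sum.inl p then
          (((Net.mk A' : Net V).resolve p v c).children x).erase (Sum.inr 1)
        else ((Net.mk A' : Net V).resolve p v c).children x :=
      fun x => mk_erase_children _ _ _ x
    have hP_r0 : (Net.mk A2 : Net (V ⊕ Fin 3)).parents (Sum.inr 0) = {Sum.inl v} := by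
      rw [hP, if_neg (by simp), resolve_parents_r0]
    have hP_r1 : (Net.mk A2 : Net (V ⊕ Fin 3)).parents (Sum.inr 1) = {Sum.inr 0} := by
      rw [hP, if_pos rfl, resolve_parents_r1]
      ext y
      simp only [Finset.mem_erase, Finset.mem_insert, Finset.mem_singleton]
      constructor
      · rintro ⟨h1, h2 | h2⟩
        · exact h2
        · exact absurd h2 h1
      · rintro rfl; exact ⟨by simp, Or.inl rfl⟩
    have hP_r2 : (Net.mk A2 : Net (V ⊕ Fin 3)).parents (Sum.inr 2) = {Sum.inr 0} := by
      rw [hP, if_neg (by simp), resolve_parents_r2]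
    have hP_inl : ∀ a : V, a ≠ v → a ≠ c → (Net.mk A2 : Net (V ⊕ Fin 3)).parents (Sum.inl a) =
        ((Net.mk A' : Net V).parents a).image Sum.inl := by
      intro a h1 h2
      rw [hP, if_neg (by simp), resolve_parents_inl a h1 h2]
    have hP_v : (Net.mk A2 : Net (V ⊕ Fin 3)).parents (Sum.inl v) =
        ((Net.mk A' : Net V).parents v).image Sum.inl := by
      rw [hP, if_neg (by simp), resolve_parents_v hvcne,
        Finset.erase_eq_of_notMem hApnotparent]
    have hP_c : (Net.mk A2 : Net (V ⊕ Fin 3)).parents (Sum.inl c) = {Sum.inr 1} := by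
      rw [hP, if_neg (by simp), resolve_parents_c hvcne, hAparents_c]
      simp
    have hC_inl : ∀ a : V, a ≠ p → a ≠ v → (Net.mk A2 : Net (V ⊕ Fin 3)).children (Sum.inl a) =
        ((Net.mk A' : Net V).children a).image Sum.inl := by
      intro a h1 h2
      rw [hC, if_neg (by simp [h1]), resolve_children_inl a h1 h2]
    have hC_p : (Net.mk A2 : Net (V ⊕ Fin 3)).children (Sum.inl p) =
        ((Net.mk A' : Net V).children p).image Sum.inl := by
      rw [hC, if_pos rfl, resolve_children_p hpvne, Finset.erase_eq_of_notMem hAvnotchild_p]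
      ext y
      simp only [Finset.mem_erase, Finset.mem_union, Finset.mem_singleton, Finset.mem_image]
      constructor
      · rintro ⟨h1, ⟨b, hb, rfl⟩ | h2⟩
        · exact ⟨b, hb, rfl⟩
        · exact absurd h2 h1
      · rintro ⟨b, hb, rfl⟩
        exact ⟨by simp, Or.inl ⟨b, hb, rfl⟩⟩
    have hC_v : (Net.mk A2 : Net (V ⊕ Fin 3)).children (Sum.inl v) =
        (((Net.mk A' : Net V).children v).erase c).image Sum.inl ∪ {Sum.inr 0} := by
      rw [hC, if_neg (by simp [hvpne]), resolve_children_v hpvne]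
    have hC_r0 : (Net.mk A2 : Net (V ⊕ Fin 3)).children (Sum.inr 0) = {Sum.inr 1, Sum.inr 2} := by
      rw [hC, if_neg (by simp), resolve_children_r0]
    have hC_r1 : (Net.mk A2 : Net (V ⊕ Fin 3)).children (Sum.inr 1) = {Sum.inl c} := by
      rw [hC, if_neg (by simp), resolve_children_r1]
    have hC_r2 : (Net.mk A2 : Net (V ⊕ Fin 3)).children (Sum.inr 2) = ∅ := by
      rw [hC, if_neg (by simp), resolve_children_r2]
    have hpoutpos : 0 < N.outDeg p := by
      rw [outDeg]; exact Finset.card_pos.mpr ⟨v, hv_child_p⟩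
    refine ⟨A2, ⟨?_, ?_, ?_, ?_⟩, ?_⟩
    · -- A2 ⊆ N'.arcs
      rintro ⟨x, y⟩ hq
      rw [hA2, Finset.mem_erase] at hq
      have hq' := hq.2
      rw [mem_resolve] at hq' ⊢
      rcases hq' with ⟨a, b, hab, h1, h2, rfl, rfl⟩ | h
      · exact Or.inl ⟨a, b, hsub hab, h1, h2, rfl, rfl⟩
      · tauto
    · -- indegree ≤ 1
      rintro (a | i)
      · by_cases hav : a = v
        · rw [inDeg, hav, hP_v, Finset.card_image_of_injective _ Sum.inl_injective]
          have := hin1 v; rw [inDeg] at this; exact this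
        · by_cases hac2 : a = c
          · rw [inDeg, hac2, hP_c]; simp
          · rw [inDeg, hP_inl a hav hac2, Finset.card_image_of_injective _ Sum.inl_injective]
            have := hin1 a; rw [inDeg] at this; exact this
      · rcases hfin3 i with rfl | rfl | rfl
        · rw [inDeg, hP_r0]; simp
        · rw [inDeg, hP_r1]; simp
        · rw [inDeg, hP_r2]; simp
    · -- leaf iff
      rintro (a | i)
      · by_cases hap : a = p
        · constructor
          · intro h
            exfalso
            rw [IsLeaf, outDeg, hap, hC_p,
              Finset.card_image_of_injective _ Sum.inl_injective] at h
            have hlf : (Net.mk A' : Net V).IsLeaf p := by rw [IsLeaf, outDeg]; exact h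
            have := (hleafiff p).mp hlf
            rw [IsLeaf] at this
            omega
          · intro h
            exfalso
            rw [IsLeaf, hap, hout_p] at h
            omega
        · by_cases hav : a = v
          · constructor
            · intro h
              exfalso
              rw [IsLeaf, outDeg, hav, hC_v, Finset.card_eq_zero] at h
              have : (Sum.inr 0 : V ⊕ Fin 3) ∈
                  (((Net.mk A' : Net V).children v).erase c).image Sum.inl ∪ {Sum.inr 0} :=
                Finset.mem_union_right _ (Finset.mem_singleton_self _)
              rw [h] at this
              simp at this
            · intro h
              exfalso
              rw [IsLeaf, hav, hout_v] at h
              omega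
          · rw [IsLeaf, IsLeaf, outDeg, hC_inl a hap hav,
              Finset.card_image_of_injective _ Sum.inl_injective, hout_inl a hap hav]
            have := hleafiff a
            rw [IsLeaf, IsLeaf, outDeg, outDeg] at this
            exact this
      · rcases hfin3 i with rfl | rfl | rfl
        · rw [IsLeaf, IsLeaf, outDeg, hC_r0, hout_r0]; simp
        · rw [IsLeaf, IsLeaf, outDeg, hC_r1, hout_r1]; simp
        · rw [IsLeaf, IsLeaf, outDeg, hC_r2, hout_r2]; simp
    · -- crossing arcs
      have harcmap : ∀ x y : V ⊕ Fin 3, (x, y) ∈ A2 →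
          (Net.mk A' : Net V).SameTree (Sum.elim id (fun _ => v) x)
            (Sum.elim id (fun _ => v) y) := by
        intro x y hxy
        rw [hA2, Finset.mem_erase] at hxy
        obtain ⟨hne, hmem⟩ := hxy
        rw [mem_resolve] at hmem
        rcases hmem with ⟨a, b, hab, h1, h2, rfl, rfl⟩ | ⟨rfl, rfl⟩ | ⟨rfl, rfl⟩ |
          ⟨rfl, rfl⟩ | ⟨rfl, rfl⟩ | ⟨rfl, rfl⟩
        · exact Relation.ReflTransGen.single (Or.inl hab)
        · exact Relation.ReflTransGen.refl
        · exact Relation.ReflTransGen.refl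
        · exact Relation.ReflTransGen.single (Or.inl hvcA)
        · exact Relation.ReflTransGen.refl
        · exact absurd rfl hne
      have hmapA : ∀ x y, (Net.mk A2 : Net (V ⊕ Fin 3)).SameTree x y →
          (Net.mk A' : Net V).SameTree (Sum.elim id (fun _ => v) x)
            (Sum.elim id (fun _ => v) y) := by
        intro x y h
        refine rtg_lift _ ?_ h
        rintro a b (hab | hab)
        · exact harcmap a b hab
        · exact sameTree_symm _ (harcmap b a hab)
      rintro ⟨x, y⟩ hxy hnot
      rw [mem_resolve] at hxy
      rcases hxy with ⟨a, b, hab, h1, h2, rfl, rfl⟩ | ⟨rfl, rfl⟩ | ⟨rfl, rfl⟩ |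
        ⟨rfl, rfl⟩ | ⟨rfl, rfl⟩ | ⟨rfl, rfl⟩
      · by_cases habA : (a, b) ∈ A'
        · exfalso
          apply hnot
          rw [hA2, Finset.mem_erase]
          refine ⟨by simp, ?_⟩
          rw [mem_resolve]
          exact Or.inl ⟨a, b, habA, h1, h2, rfl, rfl⟩
        · intro hst
          exact hcross (a, b) hab habA (by simpa using hmapA _ _ hst)
      · exfalso; apply hnot; rw [hA2, Finset.mem_erase]
        exact ⟨by simp, by rw [mem_resolve]; exact Or.inr (Or.inl ⟨rfl, rfl⟩)⟩
      · exfalso; apply hnot; rw [hA2, Finset.mem_erase]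
        exact ⟨by simp, by rw [mem_resolve]; exact Or.inr (Or.inr (Or.inl ⟨rfl, rfl⟩))⟩
      · exfalso; apply hnot; rw [hA2, Finset.mem_erase]
        exact ⟨by simp, by rw [mem_resolve]; exact Or.inr (Or.inr (Or.inr (Or.inl ⟨rfl, rfl⟩)))⟩
      · exfalso; apply hnot; rw [hA2, Finset.mem_erase]
        refine ⟨by simp, ?_⟩
        rw [mem_resolve]
        exact Or.inr (Or.inr (Or.inr (Or.inr (Or.inl ⟨rfl, rfl⟩))))
      · intro hst
        have := hmapA _ _ hst
        simp only [Sum.elim_inl, Sum.elim_inr] at this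
        exact hcross (p, v) hpv_arc hpA this
    · -- roots card
      have heq : (Net.mk A2 : Net (V ⊕ Fin 3)).roots =
          ((Net.mk A' : Net V).roots).image Sum.inl := by
        ext x
        simp only [roots, Finset.mem_filter, Finset.mem_univ, true_and, Finset.mem_image]
        rcases x with a | i
        · by_cases hav : a = v
          · rw [IsRoot, inDeg, hav, hP_v, Finset.card_image_of_injective _ Sum.inl_injective]
            constructor
            · intro h; exact ⟨v, by rw [IsRoot, inDeg]; exact h, rfl⟩
            · rintro ⟨b, hb, hbe⟩
              obtain rfl : b = v := by simpa using hbe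
              rw [IsRoot, inDeg] at hb; exact hb
          · by_cases hac2 : a = c
            · constructor
              · intro h
                rw [IsRoot, inDeg, hac2, hP_c] at h; simp at h
              · rintro ⟨b, hb, hbe⟩
                obtain rfl : b = a := by simpa using hbe
                rw [IsRoot, inDeg, hac2, hAparents_c] at hb; simp at hb
            · rw [IsRoot, inDeg, hP_inl a hav hac2,
                Finset.card_image_of_injective _ Sum.inl_injective]
              constructor
              · intro h; exact ⟨a, by rw [IsRoot, inDeg]; exact h, rfl⟩
              · rintro ⟨b, hb, hbe⟩
                obtain rfl : b = a := by simpa using hbe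
                rw [IsRoot, inDeg] at hb; exact hb
        · rcases hfin3 i with rfl | rfl | rfl
          · simp [IsRoot, inDeg, hP_r0]
          · simp [IsRoot, inDeg, hP_r1]
          · simp [IsRoot, inDeg, hP_r2]
      rw [heq, Finset.card_image_of_injective _ Sum.inl_injective]
      exact hAroots
end

section
/- Let Y be a finite set with |Y| ≥ 3 and 𝒞 a collection of 3-element subsets of Y, and let N be the 2-network constructed from (Y, 𝒞) as follows: take two isomorphic caterpillar trees T1, T2 on leaf set Y ∪ {l}, identify the non-l leaves pairwise to form indegree-2 reticulations; attach to each y ∈ Y a directed path P_y of length c(y) + 1 where c(y) is the number of sets in 𝒞 containing y, with internal vertices labeled by the sets of 𝒞 containing y; and for each S ∈ 𝒞 create an indegree-3 reticulation h_S whose parents are the three vertices labeled S, with a new leaf l_S below h_S. Then N is proper forest-based if and only if there exists a bipartition {A, B} of Y such that every S ∈ 𝒞 meets both A and B. -/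
open Finset

namespace FB

/-- Vertices of the Set-Splitting network constructed from `Y = Fin n` and a
family `𝒞` of `k` three-element subsets of `Y`:
* `spine i j`: the `j`-th internal vertex of the caterpillar tree `T_{i+1}` (`i : Fin 2`);
* `lleaf i`: the extra leaf `l` of `T_{i+1}` (in its cherry);
* `xvtx y`: the identified leaf `y ∈ Y` of both trees (a reticulation of indegree 2);
* `pvtx y s`: the internal vertex of the path `P_y` labeled by the set `𝒞 s`
  (valid only when `y ∈ 𝒞 s`);
* `pleaf y`: the terminal leaf of the path `P_y`;
* `hvtx s`: the indegree-3 reticulation `h_S` for `S = 𝒞 s`;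
* `lvtx s`: the leaf `l_S` below `h_S`. -/
inductive SVtx (n k : ℕ) where
  | spine : Fin 2 → Fin n → SVtx n k
  | lleaf : Fin 2 → SVtx n k
  | xvtx : Fin n → SVtx n k
  | pvtx : Fin n → Fin k → SVtx n k
  | pleaf : Fin n → SVtx n k
  | hvtx : Fin k → SVtx n k
  | lvtx : Fin k → SVtx n k
  deriving DecidableEq, Fintype

variable {n k : ℕ} (𝒞 : Fin k → Finset (Fin n))

/-- Which formal vertices actually occur in the construction. -/
def SValid : SVtx n k → Prop
  | .pvtx y s => y ∈ 𝒞 s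
  | _ => True

instance : DecidablePred (SValid (n := n) (k := k) 𝒞) := fun v => by
  cases v <;> simp only [SValid] <;> infer_instance

/-- `s` is the first index (in the order of `Fin k`) with `y ∈ 𝒞 s`. -/
def idxMin (y : Fin n) (s : Fin k) : Prop := y ∈ 𝒞 s ∧ ∀ t, y ∈ 𝒞 t → s ≤ t

/-- `s` is the last index with `y ∈ 𝒞 s`. -/
def idxMax (y : Fin n) (s : Fin k) : Prop := y ∈ 𝒞 s ∧ ∀ t, y ∈ 𝒞 t → t ≤ s

/-- `s'` is the successor of `s` among the indices `t` with `y ∈ 𝒞 t`. -/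
def idxSucc (y : Fin n) (s s' : Fin k) : Prop :=
  y ∈ 𝒞 s ∧ y ∈ 𝒞 s' ∧ s < s' ∧ ∀ t, y ∈ 𝒞 t → ¬ (s < t ∧ t < s')

instance (y : Fin n) (s : Fin k) : Decidable (idxMin 𝒞 y s) :=
  decidable_of_iff (y ∈ 𝒞 s ∧ ∀ t, y ∈ 𝒞 t → s ≤ t) Iff.rfl

instance (y : Fin n) (s : Fin k) : Decidable (idxMax 𝒞 y s) :=
  decidable_of_iff (y ∈ 𝒞 s ∧ ∀ t, y ∈ 𝒞 t → t ≤ s) Iff.rfl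

instance (y : Fin n) (s s' : Fin k) : Decidable (idxSucc 𝒞 y s s') :=
  decidable_of_iff (y ∈ 𝒞 s ∧ y ∈ 𝒞 s' ∧ s < s' ∧ ∀ t, y ∈ 𝒞 t → ¬ (s < t ∧ t < s')) Iff.rfl

/-- The arcs of the Set-Splitting network:
* the two caterpillars `T₁, T₂` have spine arcs `spine i j → spine i (j+1)`,
  pendant arcs `spine i j → xvtx j`, and the cherry arc `spine i (n-1) → lleaf i`;
* the path `P_y` hangs below the reticulation `xvtx y`, running through the
  vertices `pvtx y s` for the indices `s` with `y ∈ 𝒞 s` in increasing order and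
  ending at the leaf `pleaf y`;
* for every `s : Fin k` and every `y ∈ 𝒞 s`, `pvtx y s` is a parent of the
  reticulation `hvtx s` (so `hvtx s` has indegree 3), which carries the pendant
  leaf `lvtx s`. -/
def SArc : SVtx n k → SVtx n k → Prop
  | .spine i j, .spine i' j' => i = i' ∧ (j' : ℕ) = (j : ℕ) + 1
  | .spine _ j, .xvtx y => y = j
  | .spine i j, .lleaf i' => i = i' ∧ (j : ℕ) = n - 1
  | .xvtx y, .pvtx y' s => y = y' ∧ idxMin 𝒞 y s
  | .xvtx y, .pleaf y' => y = y' ∧ ∀ t, y ∉ 𝒞 t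
  | .pvtx y s, .pvtx y' s' => y = y' ∧ idxSucc 𝒞 y s s'
  | .pvtx y s, .pleaf y' => y = y' ∧ idxMax 𝒞 y s
  | .pvtx y s, .hvtx s' => s = s' ∧ y ∈ 𝒞 s
  | .hvtx s, .lvtx s' => s = s'
  | _, _ => False

instance : DecidableRel (SArc (n := n) (k := k) 𝒞) := fun a b => by
  cases a <;> cases b <;> simp only [SArc] <;> infer_instance

/-- The 2-network constructed from the Set-Splitting instance `(Fin n, 𝒞)`. -/
def net14 : Net {v : SVtx n k // SValid 𝒞 v} :=
  ⟨Finset.univ.filter (fun a => SArc 𝒞 a.1.1 a.2.1)⟩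

end FB

namespace FB
namespace Stmt14Aux

open FB FB.Net Finset

variable {n k : ℕ} (𝒞 : Fin k → Finset (Fin n))

lemma mem_arcs (u v : {v : SVtx n k // SValid 𝒞 v}) :
    (u, v) ∈ (net14 𝒞).arcs ↔ SArc 𝒞 u.1 v.1 := by
  simp [net14]

/-- minimal/maximal index lemmas -/
lemma idxMin_unique {y : Fin n} {s s' : Fin k} (h : idxMin 𝒞 y s) (h' : idxMin 𝒞 y s') :
    s = s' := le_antisymm (h.2 _ h'.1) (h'.2 _ h.1)

lemma idxMax_unique {y : Fin n} {s s' : Fin k} (h : idxMax 𝒞 y s) (h' : idxMax 𝒞 y s') :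
    s = s' := le_antisymm (h'.2 _ h.1) (h.2 _ h'.1)

lemma idxSucc_unique_left {y : Fin n} {s₁ s₂ s : Fin k}
    (h₁ : idxSucc 𝒞 y s₁ s) (h₂ : idxSucc 𝒞 y s₂ s) : s₁ = s₂ := by
  rcases lt_trichotomy s₁ s₂ with h | h | h
  · exact absurd ⟨h, h₂.2.2.1⟩ (h₁.2.2.2 _ h₂.1)
  · exact h
  · exact absurd ⟨h, h₁.2.2.1⟩ (h₂.2.2.2 _ h₁.1)

lemma idxSucc_unique_right {y : Fin n} {s s₁ s₂ : Fin k}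
    (h₁ : idxSucc 𝒞 y s s₁) (h₂ : idxSucc 𝒞 y s s₂) : s₁ = s₂ := by
  rcases lt_trichotomy s₁ s₂ with h | h | h
  · exact absurd ⟨h₁.2.2.1, h⟩ (h₂.2.2.2 _ h₁.2.1)
  · exact h
  · exact absurd ⟨h₂.2.2.1, h⟩ (h₁.2.2.2 _ h₂.2.1)

lemma not_min_succ {y : Fin n} {s'' s : Fin k} (h : idxMin 𝒞 y s) (h' : idxSucc 𝒞 y s'' s) :
    False := absurd (h.2 _ h'.1) (not_le.2 h'.2.2.1)

lemma not_max_succ {y : Fin n} {s s' : Fin k} (h : idxMax 𝒞 y s) (h' : idxSucc 𝒞 y s s') :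
    False := absurd (h.2 _ h'.2.1) (not_le.2 h'.2.2.1)

/-- existence of the predecessor on the path `P_y`. -/
lemma parent_on_path {y : Fin n} {s : Fin k} (hy : y ∈ 𝒞 s) :
    idxMin 𝒞 y s ∨ ∃ s'', y ∈ 𝒞 s'' ∧ idxSucc 𝒞 y s'' s := by
  by_cases h : ∃ t, y ∈ 𝒞 t ∧ t < s
  · right
    have hne : (Finset.univ.filter (fun t => y ∈ 𝒞 t ∧ t < s)).Nonempty := by
      obtain ⟨t, ht⟩ := h; exact ⟨t, by simp [ht.1, ht.2]⟩
    set s'' := (Finset.univ.filter (fun t => y ∈ 𝒞 t ∧ t < s)).max' hne with hs''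
    have hmem : y ∈ 𝒞 s'' ∧ s'' < s :=
      (Finset.mem_filter.1 ((Finset.univ.filter (fun t => y ∈ 𝒞 t ∧ t < s)).max'_mem hne)).2
    refine ⟨s'', hmem.1, hmem.1, hy, hmem.2, ?_⟩
    intro t ht ⟨h1, h2⟩
    have : t ≤ s'' := Finset.le_max' _ _ (by simp [ht, h2])
    exact absurd h1 (not_lt.2 this)
  · left
    push_neg at h
    exact ⟨hy, fun t ht => h t ht⟩

/-- existence of the successor on the path `P_y`. -/
lemma child_on_path {y : Fin n} {s : Fin k} (hy : y ∈ 𝒞 s) :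
    idxMax 𝒞 y s ∨ ∃ s', y ∈ 𝒞 s' ∧ idxSucc 𝒞 y s s' := by
  by_cases h : ∃ t, y ∈ 𝒞 t ∧ s < t
  · right
    have hne : (Finset.univ.filter (fun t => y ∈ 𝒞 t ∧ s < t)).Nonempty := by
      obtain ⟨t, ht⟩ := h; exact ⟨t, by simp [ht.1, ht.2]⟩
    set s' := (Finset.univ.filter (fun t => y ∈ 𝒞 t ∧ s < t)).min' hne with hs'
    have hmem : y ∈ 𝒞 s' ∧ s < s' :=
      (Finset.mem_filter.1 ((Finset.univ.filter (fun t => y ∈ 𝒞 t ∧ s < t)).min'_mem hne)).2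
    refine ⟨s', hmem.1, hy, hmem.1, hmem.2, ?_⟩
    intro t ht ⟨h1, h2⟩
    have : s' ≤ t := Finset.min'_le _ _ (by simp [ht, h1])
    exact absurd h2 (not_lt.2 this)
  · left
    push_neg at h
    exact ⟨hy, fun t ht => h t ht⟩

lemma first_on_path {y : Fin n} : (∀ t, y ∉ 𝒞 t) ∨ ∃ s, y ∈ 𝒞 s ∧ idxMin 𝒞 y s := by
  by_cases h : ∃ t, y ∈ 𝒞 t
  · right
    obtain ⟨t, ht⟩ := h
    have hne : (Finset.univ.filter (fun t => y ∈ 𝒞 t)).Nonempty := ⟨t, by simp [ht]⟩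
    set s := (Finset.univ.filter (fun t => y ∈ 𝒞 t)).min' hne with hs
    have hmem : y ∈ 𝒞 s := by
      have := (Finset.univ.filter (fun t => y ∈ 𝒞 t)).min'_mem hne
      simpa using this
    exact ⟨s, hmem, hmem, fun t' ht' => Finset.min'_le _ _ (by simp [ht'])⟩
  · left; push_neg at h; exact h

/-- Arcs kept in the spanning forest, given a coloring `σ` of `Y` and a choice
`y₀ s` of the minority-colored element of each `𝒞 s`. -/
def keep (σ : Fin n → Fin 2) (y₀ : Fin k → Fin n) : SVtx n k → SVtx n k → Prop
  | .spine i _, .xvtx y => i = σ y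
  | .pvtx y _, .hvtx s' => y = y₀ s'
  | _, _ => True

instance (σ : Fin n → Fin 2) (y₀ : Fin k → Fin n) :
    DecidableRel (keep (n := n) (k := k) σ y₀) := fun a b => by
  cases a <;> cases b <;> simp only [keep] <;> infer_instance

/-- The spanning forest. -/
def FA (σ : Fin n → Fin 2) (y₀ : Fin k → Fin n) :
    Finset ({v : SVtx n k // SValid 𝒞 v} × {v : SVtx n k // SValid 𝒞 v}) :=
  (net14 𝒞).arcs.filter (fun a => keep σ y₀ a.1.1 a.2.1)

variable {σ : Fin n → Fin 2} {y₀ : Fin k → Fin n}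

lemma mem_FA {u v : {v : SVtx n k // SValid 𝒞 v}} :
    (u, v) ∈ FA 𝒞 σ y₀ ↔ SArc 𝒞 u.1 v.1 ∧ keep σ y₀ u.1 v.1 := by
  simp [FA, net14]

/-- The component of each vertex in the forest. -/
def comp (σ : Fin n → Fin 2) (y₀ : Fin k → Fin n) : SVtx n k → Fin 2
  | .spine i _ => i
  | .lleaf i => i
  | .xvtx y => σ y
  | .pvtx y _ => σ y
  | .pleaf y => σ y
  | .hvtx s => σ (y₀ s)
  | .lvtx s => σ (y₀ s)

lemma comp_arc {u v : SVtx n k} (ha : SArc 𝒞 u v) (hk : keep σ y₀ u v) :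
    comp σ y₀ u = comp σ y₀ v := by
  cases u <;> cases v <;> simp_all [SArc, keep, comp]

lemma comp_not_keep {u v : SVtx n k} (ha : SArc 𝒞 u v) (hk : ¬ keep σ y₀ u v)
    (hmin : ∀ s, ∀ y ∈ 𝒞 s, y ≠ y₀ s → σ y ≠ σ (y₀ s)) :
    comp σ y₀ u ≠ comp σ y₀ v := by
  cases u <;> cases v <;> simp_all [SArc, keep, comp]
  obtain ⟨rfl, hy⟩ := ha
  exact hmin _ _ hy hk

lemma comp_sameTree {u v : {v : SVtx n k // SValid 𝒞 v}}
    (h : (Net.mk (FA 𝒞 σ y₀)).SameTree u v) : comp σ y₀ u.1 = comp σ y₀ v.1 := by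
  induction h with
  | refl => rfl
  | tail _ hbc ih =>
    rename_i b c _
    rcases hbc with h' | h'
    · rw [ih]
      exact comp_arc 𝒞 ((mem_FA 𝒞).1 h').1 ((mem_FA 𝒞).1 h').2
    · rw [ih, comp_arc 𝒞 ((mem_FA 𝒞).1 h').1 ((mem_FA 𝒞).1 h').2]

/-- uniqueness of parents in the forest. -/
lemma FA_parent_unique {v u₁ u₂ : {v : SVtx n k // SValid 𝒞 v}}
    (h₁ : (u₁, v) ∈ FA 𝒞 σ y₀) (h₂ : (u₂, v) ∈ FA 𝒞 σ y₀) : u₁ = u₂ := by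
  rw [mem_FA] at h₁ h₂
  obtain ⟨u₁, hv₁⟩ := u₁
  obtain ⟨u₂, hv₂⟩ := u₂
  obtain ⟨v, hv⟩ := v
  apply Subtype.ext
  simp only
  cases v <;> cases u₁ <;> cases u₂ <;> simp_all [SArc, keep]
  all_goals try omega
  all_goals
    obtain ⟨rfl, h₁⟩ := h₁
    obtain ⟨h2e, h₂⟩ := h₂
    subst h2e
    first
    | exact not_min_succ 𝒞 h₁ h₂
    | exact not_min_succ 𝒞 h₂ h₁
    | exact idxSucc_unique_left 𝒞 h₁ h₂
    | exact h₁ _ h₂.1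
    | exact h₂ _ h₁.1
    | exact idxMax_unique 𝒞 h₁ h₂

lemma last_on_path {y : Fin n} : (∀ t, y ∉ 𝒞 t) ∨ ∃ s, y ∈ 𝒞 s ∧ idxMax 𝒞 y s := by
  by_cases h : ∃ t, y ∈ 𝒞 t
  · right
    obtain ⟨t, ht⟩ := h
    have hne : (Finset.univ.filter (fun t => y ∈ 𝒞 t)).Nonempty := ⟨t, by simp [ht]⟩
    set s := (Finset.univ.filter (fun t => y ∈ 𝒞 t)).max' hne with hs
    have hmem : y ∈ 𝒞 s := by
      have := (Finset.univ.filter (fun t => y ∈ 𝒞 t)).max'_mem hne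
      simpa using this
    exact ⟨s, hmem, hmem, fun t' ht' => Finset.le_max' _ _ (by simp [ht'])⟩
  · left; push_neg at h; exact h

lemma FA_subset : FA 𝒞 σ y₀ ⊆ (net14 𝒞).arcs := Finset.filter_subset _ _

lemma FA_no_parent_iff (hn : 3 ≤ n) (hy₀ : ∀ s, y₀ s ∈ 𝒞 s)
    (v : {v : SVtx n k // SValid 𝒞 v}) :
    (∀ u, (u, v) ∉ FA 𝒞 σ y₀) ↔
      (v.1 = SVtx.spine 0 ⟨0, by omega⟩ ∨ v.1 = SVtx.spine 1 ⟨0, by omega⟩) := by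
  constructor
  · intro h
    obtain ⟨v, hv⟩ := v
    simp only
    cases v with
    | spine i j =>
      rcases Nat.eq_zero_or_pos j.val with hj | hj
      · have hj' : j = ⟨0, by omega⟩ := Fin.ext hj
        fin_cases i
        · exact Or.inl (by rw [hj']; rfl)
        · exact Or.inr (by rw [hj']; rfl)
      · exfalso
        apply h ⟨.spine i ⟨j.val - 1, by omega⟩, trivial⟩
        rw [mem_FA]
        exact ⟨⟨rfl, by simp; omega⟩, trivial⟩
    | lleaf i =>
      exfalso
      apply h ⟨.spine i ⟨n - 1, by omega⟩, trivial⟩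
      rw [mem_FA]
      exact ⟨⟨rfl, by simp⟩, trivial⟩
    | xvtx y =>
      exfalso
      apply h ⟨.spine (σ y) y, trivial⟩
      rw [mem_FA]
      exact ⟨rfl, rfl⟩
    | pvtx y s =>
      exfalso
      rcases parent_on_path 𝒞 (hv : y ∈ 𝒞 s) with hm | ⟨s'', hmem, hsucc⟩
      · exact h ⟨.xvtx y, trivial⟩ ((mem_FA 𝒞).2 ⟨⟨rfl, hm⟩, trivial⟩)
      · exact h ⟨.pvtx y s'', hmem⟩ ((mem_FA 𝒞).2 ⟨⟨rfl, hsucc⟩, trivial⟩)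
    | pleaf y =>
      exfalso
      rcases last_on_path 𝒞 (y := y) with hm | ⟨s, hmem, hmax⟩
      · exact h ⟨.xvtx y, trivial⟩ ((mem_FA 𝒞).2 ⟨⟨rfl, hm⟩, trivial⟩)
      · exact h ⟨.pvtx y s, hmem⟩ ((mem_FA 𝒞).2 ⟨⟨rfl, hmax⟩, trivial⟩)
    | hvtx s =>
      exfalso
      apply h ⟨.pvtx (y₀ s) s, hy₀ s⟩
      rw [mem_FA]
      exact ⟨⟨rfl, hy₀ s⟩, rfl⟩
    | lvtx s =>
      exfalso
      exact h ⟨.hvtx s, trivial⟩ ((mem_FA 𝒞).2 ⟨rfl, trivial⟩)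
  · intro h u hu
    rw [mem_FA] at hu
    obtain ⟨u, hvu⟩ := u
    rcases h with h | h <;> rw [h] at hu <;> cases u <;> simp [SArc] at hu <;> omega

lemma FA_child_exists (hn : 3 ≤ n) (v : {v : SVtx n k // SValid 𝒞 v})
    (hne : ∃ u : {v : SVtx n k // SValid 𝒞 v}, SArc 𝒞 v.1 u.1) :
    ∃ c, (v, c) ∈ FA 𝒞 σ y₀ := by
  obtain ⟨v, hv⟩ := v
  cases v with
  | spine i j =>
    by_cases hj : j.val + 1 < n
    · exact ⟨⟨.spine i ⟨j.val + 1, hj⟩, trivial⟩, (mem_FA 𝒞).2 ⟨⟨rfl, rfl⟩, trivial⟩⟩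
    · have : j.val = n - 1 := by omega
      exact ⟨⟨.lleaf i, trivial⟩, (mem_FA 𝒞).2 ⟨⟨rfl, this⟩, trivial⟩⟩
  | lleaf i => obtain ⟨u, hu⟩ := hne; obtain ⟨u, _⟩ := u; cases u <;> exact hu.elim
  | xvtx y =>
    rcases first_on_path 𝒞 (y := y) with hm | ⟨s, hmem, hmin⟩
    · exact ⟨⟨.pleaf y, trivial⟩, (mem_FA 𝒞).2 ⟨⟨rfl, hm⟩, trivial⟩⟩
    · exact ⟨⟨.pvtx y s, hmem⟩, (mem_FA 𝒞).2 ⟨⟨rfl, hmin⟩, trivial⟩⟩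
  | pvtx y s =>
    rcases child_on_path 𝒞 (hv : y ∈ 𝒞 s) with hm | ⟨s', hmem, hsucc⟩
    · exact ⟨⟨.pleaf y, trivial⟩, (mem_FA 𝒞).2 ⟨⟨rfl, hm⟩, trivial⟩⟩
    · exact ⟨⟨.pvtx y s', hmem⟩, (mem_FA 𝒞).2 ⟨⟨rfl, hsucc⟩, trivial⟩⟩
  | pleaf y => obtain ⟨u, hu⟩ := hne; obtain ⟨u, _⟩ := u; cases u <;> exact hu.elim
  | hvtx s => exact ⟨⟨.lvtx s, trivial⟩, (mem_FA 𝒞).2 ⟨rfl, trivial⟩⟩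
  | lvtx s => obtain ⟨u, hu⟩ := hne; obtain ⟨u, _⟩ := u; cases u <;> exact hu.elim

lemma leaf_char (M : Net {v : SVtx n k // SValid 𝒞 v}) (v : {v : SVtx n k // SValid 𝒞 v}) :
    M.IsLeaf v ↔ ∀ u, (v, u) ∉ M.arcs := by
  simp [Net.IsLeaf, Net.outDeg, Net.children, Finset.card_eq_zero, Finset.filter_eq_empty_iff]

lemma FA_leaf_iff (hn : 3 ≤ n) (v : {v : SVtx n k // SValid 𝒞 v}) :
    (Net.mk (FA 𝒞 σ y₀)).IsLeaf v ↔ (net14 𝒞).IsLeaf v := by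
  rw [leaf_char, leaf_char]
  by_cases hL : ∀ u : {v : SVtx n k // SValid 𝒞 v}, ¬ SArc 𝒞 v.1 u.1
  · constructor
    · intro _ u hu; exact hL u ((mem_arcs 𝒞 _ _).1 hu)
    · intro _ u hu; exact hL u ((mem_FA 𝒞).1 hu).1
  · push_neg at hL
    obtain ⟨c, hc⟩ := FA_child_exists 𝒞 (σ := σ) (y₀ := y₀) hn v hL
    exact iff_of_false (fun h => h c hc) (fun h => h c (FA_subset 𝒞 hc))

lemma FA_roots_card (hn : 3 ≤ n) (hy₀ : ∀ s, y₀ s ∈ 𝒞 s) :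
    (Net.mk (FA 𝒞 σ y₀)).roots.card = 2 := by
  have hr : (Net.mk (FA 𝒞 σ y₀)).roots =
      {⟨SVtx.spine 0 ⟨0, by omega⟩, trivial⟩, ⟨SVtx.spine 1 ⟨0, by omega⟩, trivial⟩} := by
    ext v
    have h0 : (Net.mk (FA 𝒞 σ y₀)).inDeg v = 0 ↔ ∀ u, (u, v) ∉ FA 𝒞 σ y₀ := by
      rw [Net.inDeg, Finset.card_eq_zero]
      simp [Net.parents, Finset.filter_eq_empty_iff]
    simp only [Net.roots, Finset.mem_filter, Finset.mem_univ, true_and,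
      Finset.mem_insert, Finset.mem_singleton]
    rw [Net.IsRoot, h0, FA_no_parent_iff 𝒞 hn hy₀, Subtype.ext_iff, Subtype.ext_iff]
  rw [hr, Finset.card_insert_of_notMem (by rw [Finset.mem_singleton, Subtype.ext_iff]; simp), Finset.card_singleton]

/-- The backward direction of the theorem. -/
lemma backward (hn : 3 ≤ n) (hy₀ : ∀ s, y₀ s ∈ 𝒞 s)
    (hmin : ∀ s, ∀ y ∈ 𝒞 s, y ≠ y₀ s → σ y ≠ σ (y₀ s)) :
    (net14 𝒞).ProperForestBased 2 := by
  refine ⟨FA 𝒞 σ y₀, ⟨FA_subset 𝒞, ?_, FA_leaf_iff 𝒞 hn, ?_⟩, FA_roots_card 𝒞 hn hy₀⟩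
  · intro v
    apply Finset.card_le_one.2
    intro a ha b hb
    simp only [Net.parents, Finset.mem_filter, Finset.mem_univ, true_and] at ha hb
    exact FA_parent_unique 𝒞 ha hb
  · rintro ⟨u, w⟩ ha hna hst
    rw [mem_arcs] at ha
    have hnk : ¬ keep σ y₀ u.1 w.1 := fun hk => hna ((mem_FA 𝒞).2 ⟨ha, hk⟩)
    exact comp_not_keep 𝒞 ha hnk hmin (comp_sameTree 𝒞 hst)

/-- The forward direction of the theorem. -/
lemma forward (hn : 3 ≤ n) (h3 : ∀ s, (𝒞 s).card = 3)
    (hpfb : (net14 𝒞).ProperForestBased 2) :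
    ∃ τ : Fin n → Fin 2, ∀ s : Fin k, ∃ y₁ ∈ 𝒞 s, ∃ y₂ ∈ 𝒞 s, τ y₁ ≠ τ y₂ := by
  obtain ⟨A', ⟨hsub, hdeg, hleaf, hcross⟩, hroots⟩ := hpfb
  set M : Net {v : SVtx n k // SValid 𝒞 v} := Net.mk A' with hM
  have hsymm : ∀ {a b}, M.SameTree a b → M.SameTree b a :=
    fun h => (@Relation.ReflTransGen.symmetric _ _ ⟨fun _ _ h => Or.symm h⟩).symm _ _ h
  have hstep : ∀ {u v}, (u, v) ∈ A' → M.SameTree u v :=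
    fun h => Relation.ReflTransGen.single (Or.inl h)
  have harc : ∀ {u v}, (u, v) ∈ A' → SArc 𝒞 u.1 v.1 :=
    fun h => (mem_arcs 𝒞 _ _).1 (hsub h)
  set r0 : {v : SVtx n k // SValid 𝒞 v} := ⟨.spine 0 ⟨0, by omega⟩, trivial⟩ with hr0def
  set r1 : {v : SVtx n k // SValid 𝒞 v} := ⟨.spine 1 ⟨0, by omega⟩, trivial⟩ with hr1def
  have hnoparent : ∀ (i : Fin 2) (hv : SValid 𝒞 (.spine i ⟨0, by omega⟩))
      (u : {v : SVtx n k // SValid 𝒞 v}),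
      (u, (⟨.spine i ⟨0, by omega⟩, hv⟩ : {v : SVtx n k // SValid 𝒞 v})) ∉ A' := by
    intro i hv u hu
    have h := harc hu
    obtain ⟨u, _⟩ := u
    cases u <;> simp [SArc] at h
  have hr01ne : r0 ≠ r1 := by
    rw [hr0def, hr1def, Ne, Subtype.ext_iff]
    simp
  have hroots_eq : M.roots = {r0, r1} := by
    refine (Finset.eq_of_subset_of_card_le ?_ ?_).symm
    · intro v hv
      simp only [Finset.mem_insert, Finset.mem_singleton] at hv
      have h0 : M.inDeg v = 0 := by
        rcases hv with rfl | rfl <;>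
        · rw [Net.inDeg, Finset.card_eq_zero]
          simp only [Net.parents]
          rw [Finset.filter_eq_empty_iff]
          intro u _
          exact hnoparent _ _ u
      rw [Net.roots, Finset.mem_filter]; exact ⟨Finset.mem_univ _, h0⟩
    · rw [hroots, Finset.card_insert_of_notMem (by simp [hr01ne]), Finset.card_singleton]
  have hparent : ∀ v, v ≠ r0 → v ≠ r1 → ∃ u, (u, v) ∈ A' := by
    intro v h0 h1
    by_contra h
    push_neg at h
    have hv : v ∈ M.roots := by
      have h0' : M.inDeg v = 0 := by
        rw [Net.inDeg, Finset.card_eq_zero]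
        simp only [Net.parents]
        rw [Finset.filter_eq_empty_iff]
        intro u _
        exact h u
      rw [Net.roots, Finset.mem_filter]; exact ⟨Finset.mem_univ _, h0'⟩
    rw [hroots_eq] at hv
    simp only [Finset.mem_insert, Finset.mem_singleton] at hv
    tauto
  have huniq : ∀ {v u₁ u₂}, (u₁, v) ∈ A' → (u₂, v) ∈ A' → u₁ = u₂ := by
    intro v u₁ u₂ h₁ h₂
    have hc := Finset.card_le_one.1 (hdeg v)
    exact hc u₁ (by simp [Net.parents]; exact h₁) u₂ (by simp [Net.parents]; exact h₂)
  have spdesc : ∀ m (i : Fin 2) (j : Fin n), j.val < m →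
      M.SameTree ⟨.spine i j, trivial⟩ ⟨.spine i ⟨0, by omega⟩, trivial⟩ := by
    intro m
    induction m with
    | zero => omega
    | succ m ih =>
      intro i j hj
      by_cases hj0 : j.val = 0
      · have hje : j = ⟨0, by omega⟩ := Fin.ext hj0
        rw [hje]
        exact Relation.ReflTransGen.refl
      · obtain ⟨u, hu⟩ := hparent ⟨.spine i j, trivial⟩
          (by rw [hr0def, Ne, Subtype.ext_iff]; simp; intro _ hje; exact hj0 (by rw [hje]))
          (by rw [hr1def, Ne, Subtype.ext_iff]; simp; intro _ hje; exact hj0 (by rw [hje]))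
        have h := harc hu
        obtain ⟨u, hvu⟩ := u
        cases u <;> simp [SArc] at h
        rename_i i' j'
        obtain ⟨rfl, hj'⟩ := h
        exact Relation.ReflTransGen.trans (hsymm (hstep hu)) (ih _ j' (by omega))
  have pdesc : ∀ m (s : Fin k) (y : Fin n) (hy : SValid 𝒞 (.pvtx y s)), s.val < m →
      M.SameTree ⟨.pvtx y s, hy⟩ ⟨.xvtx y, trivial⟩ := by
    intro m
    induction m with
    | zero => omega
    | succ m ih =>
      intro s y hy hs
      obtain ⟨u, hu⟩ := hparent ⟨.pvtx y s, hy⟩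
        (by rw [hr0def, Ne, Subtype.ext_iff]; simp)
        (by rw [hr1def, Ne, Subtype.ext_iff]; simp)
      have h := harc hu
      obtain ⟨u, hvu⟩ := u
      cases u <;> simp [SArc] at h
      · obtain ⟨rfl, -⟩ := h
        exact hsymm (hstep hu)
      · rename_i y'' s''
        obtain ⟨rfl, hsucc⟩ := h
        refine Relation.ReflTransGen.trans (hsymm (hstep hu)) (ih s'' _ hvu ?_)
        have hlt := Fin.lt_def.1 hsucc.2.2.1
        omega
  have hx : ∀ y : Fin n, ∃ i : Fin 2,
      M.SameTree ⟨.xvtx y, trivial⟩ ⟨.spine i ⟨0, by omega⟩, trivial⟩ ∧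
      ∀ i', M.SameTree ⟨.xvtx y, trivial⟩ ⟨.spine i' ⟨0, by omega⟩, trivial⟩ → i' = i := by
    intro y
    obtain ⟨u, hu⟩ := hparent ⟨.xvtx y, trivial⟩
      (by rw [hr0def, Ne, Subtype.ext_iff]; simp)
      (by rw [hr1def, Ne, Subtype.ext_iff]; simp)
    have h := harc hu
    obtain ⟨u, hvu⟩ := u
    cases u <;> simp [SArc] at h
    rename_i iu ju
    subst h
    refine ⟨iu, Relation.ReflTransGen.trans (hsymm (hstep hu)) (spdesc n iu _ y.isLt), ?_⟩
    intro i' hst'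
    by_contra hne
    have hnotA : ((⟨.spine i' y, trivial⟩ : {v : SVtx n k // SValid 𝒞 v}),
        (⟨.xvtx y, trivial⟩ : {v : SVtx n k // SValid 𝒞 v})) ∉ A' := by
      intro hmem
      have heq := huniq hmem hu
      rw [Subtype.ext_iff] at heq
      simp only [SVtx.spine.injEq] at heq
      exact hne heq.1
    have hcr := hcross (⟨.spine i' y, trivial⟩, ⟨.xvtx y, trivial⟩)
      ((mem_arcs 𝒞 _ _).2 rfl) hnotA
    exact hcr (Relation.ReflTransGen.trans (spdesc n i' y y.isLt) (hsymm hst'))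
  choose τ hτ1 hτ2 using hx
  refine ⟨τ, fun s => ?_⟩
  obtain ⟨u, hu⟩ := hparent ⟨.hvtx s, trivial⟩
    (by rw [hr0def, Ne, Subtype.ext_iff]; simp)
    (by rw [hr1def, Ne, Subtype.ext_iff]; simp)
  have h := harc hu
  obtain ⟨u, hvu⟩ := u
  cases u <;> simp [SArc] at h
  rename_i y₁ s₁
  obtain ⟨rfl, hy₁⟩ := h
  obtain ⟨y₂, hy₂, hne⟩ := Finset.exists_mem_ne (s := 𝒞 s₁) (by rw [h3]; omega) y₁
  refine ⟨y₁, hy₁, y₂, hy₂, fun hEq => ?_⟩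
  have hst1 : M.SameTree ⟨.hvtx s₁, trivial⟩ ⟨.spine (τ y₁) ⟨0, by omega⟩, trivial⟩ :=
    Relation.ReflTransGen.trans (hsymm (hstep hu))
      (Relation.ReflTransGen.trans (pdesc k s₁ y₁ hvu s₁.isLt) (hτ1 y₁))
  have hnotA : ((⟨.pvtx y₂ s₁, hy₂⟩ : {v : SVtx n k // SValid 𝒞 v}),
      (⟨.hvtx s₁, trivial⟩ : {v : SVtx n k // SValid 𝒞 v})) ∉ A' := by
    intro hmem
    have heq := huniq hmem hu
    rw [Subtype.ext_iff] at heq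
    simp only [SVtx.pvtx.injEq] at heq
    exact hne heq.1
  have hcr := hcross (⟨.pvtx y₂ s₁, hy₂⟩, ⟨.hvtx s₁, trivial⟩)
    ((mem_arcs 𝒞 _ _).2 ⟨rfl, hy₂⟩) hnotA
  apply hcr
  have h2 : M.SameTree ⟨.xvtx y₂, trivial⟩ ⟨.spine (τ y₁) ⟨0, by omega⟩, trivial⟩ := by
    rw [hEq]; exact hτ1 y₂
  exact Relation.ReflTransGen.trans (pdesc k s₁ y₂ hy₂ s₁.isLt)
    (Relation.ReflTransGen.trans h2 (hsymm hst1))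

end Stmt14Aux
end FB

open FB FB.Net in
/-- For `Y = Fin n` with `n ≥ 3` and a family `𝒞` of `k` pairwise
distinct 3-element subsets of `Y`, the 2-network constructed from `(Y, 𝒞)` is
proper forest-based iff there is a bipartition `{A, B}` of `Y` such that every
set `𝒞 s` meets both `A` and `B` (the Set-Splitting condition). -/
theorem stmt14 (n k : ℕ) (hn : 3 ≤ n) (𝒞 : Fin k → Finset (Fin n))
    (h3 : ∀ s, (𝒞 s).card = 3) (hinj : Function.Injective 𝒞) :
    (FB.net14 (n := n) (k := k) 𝒞).ProperForestBased 2 ↔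
      ∃ A B : Finset (Fin n), Disjoint A B ∧ A ∪ B = Finset.univ ∧
        ∀ s : Fin k, (∃ a ∈ 𝒞 s, a ∈ A) ∧ (∃ b ∈ 𝒞 s, b ∈ B) := by
  have fin2 : ∀ i : Fin 2, i = 0 ∨ i = 1 := by decide
  constructor
  · intro hpfb
    obtain ⟨τ, hτ⟩ := FB.Stmt14Aux.forward 𝒞 hn h3 hpfb
    refine ⟨Finset.univ.filter (fun y => τ y = 0), Finset.univ.filter (fun y => τ y = 1),
      ?_, ?_, ?_⟩
    · rw [Finset.disjoint_left]
      intro a ha hb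
      simp only [Finset.mem_filter, Finset.mem_univ, true_and] at ha hb
      rw [ha] at hb
      exact absurd hb (by decide)
    · ext y
      simp only [Finset.mem_union, Finset.mem_filter, Finset.mem_univ, true_and, iff_true]
      exact fin2 (τ y)
    · intro s
      obtain ⟨y₁, hy₁, y₂, hy₂, hne⟩ := hτ s
      rcases fin2 (τ y₁) with h1 | h1 <;> rcases fin2 (τ y₂) with hb | hb
      · exact absurd (h1.trans hb.symm) hne
      · exact ⟨⟨y₁, hy₁, by simp [h1]⟩, ⟨y₂, hy₂, by simp [hb]⟩⟩
      · exact ⟨⟨y₂, hy₂, by simp [hb]⟩, ⟨y₁, hy₁, by simp [h1]⟩⟩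
      · exact absurd (h1.trans hb.symm) hne
  · rintro ⟨A, B, hdis, huniv, hsplit⟩
    set σ : Fin n → Fin 2 := fun y => if y ∈ A then 0 else 1 with hσ
    have hy₀ : ∀ s : Fin k, ∃ y₀, y₀ ∈ 𝒞 s ∧ ∀ y ∈ 𝒞 s, y ≠ y₀ → σ y ≠ σ y₀ := by
      intro s
      obtain ⟨⟨a, haC, haA⟩, ⟨b, hbC, hbB⟩⟩ := hsplit s
      have hbA : b ∉ A := fun hbA => Finset.disjoint_left.1 hdis hbA hbB
      have hcard := Finset.card_filter_add_card_filter_not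
        (s := 𝒞 s) (p := fun y => y ∈ A)
      rw [h3 s] at hcard
      have hPpos : 0 < ((𝒞 s).filter (fun y => y ∈ A)).card :=
        Finset.card_pos.2 ⟨a, Finset.mem_filter.2 ⟨haC, haA⟩⟩
      have hQpos : 0 < ((𝒞 s).filter (fun y => ¬ y ∈ A)).card :=
        Finset.card_pos.2 ⟨b, Finset.mem_filter.2 ⟨hbC, hbA⟩⟩
      rcases (by omega : ((𝒞 s).filter (fun y => y ∈ A)).card = 1 ∨
          ((𝒞 s).filter (fun y => ¬ y ∈ A)).card = 1) with h1 | h1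
      · obtain ⟨y₀, hy₀⟩ := Finset.card_eq_one.1 h1
        have hy₀m : y₀ ∈ (𝒞 s).filter (fun y => y ∈ A) := hy₀ ▸ Finset.mem_singleton_self y₀
        rw [Finset.mem_filter] at hy₀m
        refine ⟨y₀, hy₀m.1, fun y hyC hyne => ?_⟩
        have hyA : y ∉ A := by
          intro hyA
          have hmem : y ∈ (𝒞 s).filter (fun y => y ∈ A) := Finset.mem_filter.2 ⟨hyC, hyA⟩
          rw [hy₀] at hmem
          exact hyne (Finset.mem_singleton.1 hmem)
        simp [hσ, hyA, hy₀m.2]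
      · obtain ⟨y₀, hy₀⟩ := Finset.card_eq_one.1 h1
        have hy₀m : y₀ ∈ (𝒞 s).filter (fun y => ¬ y ∈ A) := hy₀ ▸ Finset.mem_singleton_self y₀
        rw [Finset.mem_filter] at hy₀m
        refine ⟨y₀, hy₀m.1, fun y hyC hyne => ?_⟩
        have hyA : y ∈ A := by
          by_contra hyA
          have hmem : y ∈ (𝒞 s).filter (fun y => ¬ y ∈ A) := Finset.mem_filter.2 ⟨hyC, hyA⟩
          rw [hy₀] at hmem
          exact hyne (Finset.mem_singleton.1 hmem)
        simp [hσ, hyA, hy₀m.2]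
    choose y₀f hy₀f hminf using hy₀
    exact FB.Stmt14Aux.backward 𝒞 hn hy₀f hminf
end
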